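/- arXiv:math/0407186 — 2 statements merged into one kernel-verified Lean document; each statement's English description precedes it below -/
import Mathlib

section
/- Let X be a Urysohn space. Then there exists a commutative subgroup G of the group of isometric bijections of X that acts transitively on X (for all x, y ∈ X there is g ∈ G with g(x) = y) and contains an element of infinite order. -/
def IsUrysohn (X : Type*) [MetricSpace X] : Prop :=
  Nonempty X ∧ CompleteSpace X ∧ TopologicalSpace.SeparableSpace X ∧
    (∀ (A : Finset X) (g : X → ℝ),
      (∀ a ∈ A, 0 ≤ g a) →
      (∀ a ∈ A, ∀ b ∈ A, |g a - g b| ≤ dist a b ∧ dist a b ≤ g a + g b) →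
      ∃ z : X, ∀ a ∈ A, dist z a = g a)


set_option linter.unusedSectionVars false

namespace Ury

section Pairing
variable {A : Type*} [AddCommGroup A] [DecidableEq A]

lemma sum_pair_split {M : Type*} [AddCommMonoid M] (F : Finset A) (a b : A)
    (ha : a ∈ F) (hb : b ∈ F) (hab : a ≠ b) (f : A → M) :
    ∑ c ∈ F, f c = f a + f b + ∑ c ∈ (F.erase a).erase b, f c := by
  rw [← Finset.add_sum_erase F f ha, ← Finset.add_sum_erase (F.erase a) f
    (Finset.mem_erase.2 ⟨hab.symm, hb⟩), add_assoc]

variable (ν : A → ℝ) (hν0 : ν 0 = 0) (hνs : ∀ x, ν (-x) = ν x)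
  (hνa : ∀ x y, ν (x + y) ≤ ν x + ν y)

include hν0 hνs hνa in
lemma nu_nonneg (x : A) : 0 ≤ ν x := by
  have h := hνa x (-x)
  rw [add_neg_cancel, hν0, hνs] at h
  linarith

include hν0 hνs hνa in
lemma nu_sub_le (x y : A) : ν x - ν y ≤ ν (x - y) := by
  have h := hνa (x - y) y
  rw [sub_add_cancel] at h
  linarith

private def red (m : A → ℤ) (a b : A) : A → ℤ :=
  fun c => if c = a then m a - 1 else if c = b then m b + 1 else m c

lemma red_sum {M : Type*} [AddCommGroup M] (F : Finset A) (m : A → ℤ) (a b : A)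
    (ha : a ∈ F) (hb : b ∈ F) (hab : a ≠ b) (φ : A → ℤ → M) :
    ∑ c ∈ F, φ c (red m a b c)
      = ∑ c ∈ F, φ c (m c) - φ a (m a) - φ b (m b) + φ a (m a - 1) + φ b (m b + 1) := by
  rw [sum_pair_split F a b ha hb hab (fun c => φ c (red m a b c)),
      sum_pair_split F a b ha hb hab (fun c => φ c (m c))]
  have h1 : red m a b a = m a - 1 := by simp [red]
  have h2 : red m a b b = m b + 1 := by simp [red, hab.symm]
  have h3 : ∑ c ∈ (F.erase a).erase b, φ c (red m a b c)
      = ∑ c ∈ (F.erase a).erase b, φ c (m c) := by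
    apply Finset.sum_congr rfl
    intro c hc
    have hcb : c ≠ b := (Finset.mem_erase.1 hc).1
    have hca : c ≠ a := (Finset.mem_erase.1 (Finset.mem_erase.1 hc).2).1
    simp [red, hca, hcb]
  rw [h1, h2, h3]; abel

section RedFacts
variable (F : Finset A) (m : A → ℤ) (a b : A) (ha : a ∈ F) (hb : b ∈ F) (hab : a ≠ b)
  (hma : 0 < m a) (hmb : m b < 0)

include ha hb hab hma hmb in
lemma red_natAbs_sum : (∑ c ∈ F, (red m a b c).natAbs) + 2 = ∑ c ∈ F, (m c).natAbs := by
  rw [sum_pair_split F a b ha hb hab (fun c => (red m a b c).natAbs),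
      sum_pair_split F a b ha hb hab (fun c => (m c).natAbs)]
  have h1 : red m a b a = m a - 1 := by simp [red]
  have h2 : red m a b b = m b + 1 := by simp [red, hab.symm]
  have h3 : ∑ c ∈ (F.erase a).erase b, (red m a b c).natAbs
      = ∑ c ∈ (F.erase a).erase b, (m c).natAbs := by
    apply Finset.sum_congr rfl
    intro c hc
    have hcb : c ≠ b := (Finset.mem_erase.1 hc).1
    have hca : c ≠ a := (Finset.mem_erase.1 (Finset.mem_erase.1 hc).2).1
    simp [red, hca, hcb]
  rw [h1, h2, h3]
  omega

include ha hb hab in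
lemma red_int_sum : ∑ c ∈ F, red m a b c = ∑ c ∈ F, m c := by
  have := red_sum F m a b ha hb hab (fun _ z => z)
  rw [this]; ring

include ha hb hab in
lemma red_smul_sum : ∑ c ∈ F, red m a b c • c = (∑ c ∈ F, m c • c) - a + b := by
  have := red_sum F m a b ha hb hab (fun c z => z • c)
  rw [this, sub_smul, add_smul, one_smul, one_smul]
  abel

include ha hb hab hma hmb in
lemma red_cost_sum (H : A → ℝ) :
    ∑ c ∈ F, |((red m a b c : ℤ) : ℝ)| * H c
      = (∑ c ∈ F, |((m c : ℤ) : ℝ)| * H c) - H a - H b := by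
  have := red_sum F m a b ha hb hab (fun c z => |((z : ℤ) : ℝ)| * H c)
  rw [this]
  have e1 : |((m a - 1 : ℤ) : ℝ)| = |((m a : ℤ) : ℝ)| - 1 := by
    have h1 : (1:ℝ) ≤ ((m a : ℤ) : ℝ) := by exact_mod_cast hma
    rw [abs_of_nonneg (by linarith : (0:ℝ) ≤ ((m a : ℤ):ℝ)),
      abs_of_nonneg (by push_cast; linarith)]
    push_cast; ring
  have e2 : |((m b + 1 : ℤ) : ℝ)| = |((m b : ℤ) : ℝ)| - 1 := by
    have hmb' : m b ≤ -1 := by omega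
    have h1 : ((m b : ℤ) : ℝ) ≤ -1 := by exact_mod_cast hmb'
    rw [abs_of_nonpos (by linarith : ((m b : ℤ):ℝ) ≤ 0),
      abs_of_nonpos (by push_cast; linarith)]
    push_cast; ring
  rw [e1, e2]
  ring

end RedFacts

lemma exists_pos_neg (F : Finset A) (m : A → ℤ) (hs : ∑ a ∈ F, m a = 0)
    (c₀ : A) (hc₀F : c₀ ∈ F) (hc₀ : m c₀ ≠ 0) :
    (∃ a ∈ F, 0 < m a) ∧ (∃ b ∈ F, m b < 0) := by
  constructor
  · by_contra h
    push_neg at h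
    exact hc₀ (Finset.sum_eq_zero_iff_of_nonpos h |>.1 hs c₀ hc₀F)
  · by_contra h
    push_neg at h
    exact hc₀ (Finset.sum_eq_zero_iff_of_nonneg h |>.1 hs c₀ hc₀F)

include hν0 hνs hνa in
lemma pairing1 (F : Finset A) (H : A → ℝ)
    (hH : ∀ a ∈ F, ∀ b ∈ F, ν (a - b) ≤ H a + H b) :
    ∀ (N : ℕ) (m : A → ℤ), (∑ a ∈ F, (m a).natAbs) ≤ N → (∑ a ∈ F, m a) = 0 →
      ν (∑ a ∈ F, m a • a) ≤ ∑ a ∈ F, |((m a : ℤ) : ℝ)| * H a := by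
  intro N
  induction N with
  | zero =>
    intro m hm _
    have hz : ∀ c ∈ F, m c = 0 := by
      intro c hc
      have := Finset.sum_eq_zero_iff.1 (Nat.le_zero.1 hm) c hc
      omega
    have h0 : (∑ a ∈ F, m a • a) = 0 :=
      Finset.sum_eq_zero (fun c hc => by rw [hz c hc, zero_smul])
    rw [h0, hν0]
    exact Finset.sum_nonneg (fun c hc => by rw [hz c hc]; simp)
  | succ N ih =>
    intro m hm hs
    by_cases hz : ∀ c ∈ F, m c = 0
    · have h0 : (∑ a ∈ F, m a • a) = 0 :=
        Finset.sum_eq_zero (fun c hc => by rw [hz c hc, zero_smul])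
      rw [h0, hν0]
      exact Finset.sum_nonneg (fun c hc => by rw [hz c hc]; simp)
    · push_neg at hz
      obtain ⟨c₀, hc₀F, hc₀⟩ := hz
      obtain ⟨⟨a, haF, hma⟩, ⟨b, hbF, hmb⟩⟩ := exists_pos_neg F m hs c₀ hc₀F hc₀
      have hab : a ≠ b := by intro h; rw [h] at hma; omega
      set m' := red m a b with hm'
      have hs' : ∑ c ∈ F, m' c = 0 := by rw [red_int_sum F m a b haF hbF hab]; exact hs
      have hN' : (∑ c ∈ F, (m' c).natAbs) ≤ N := by
        have := red_natAbs_sum F m a b haF hbF hab hma hmb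
        rw [← hm'] at this
        omega
      have key : (∑ c ∈ F, m c • c) = (∑ c ∈ F, m' c • c) + (a - b) := by
        rw [red_smul_sum F m a b haF hbF hab]; abel
      calc ν (∑ c ∈ F, m c • c) ≤ ν (∑ c ∈ F, m' c • c) + ν (a - b) := by
            rw [key]; exact hνa _ _
        _ ≤ (∑ c ∈ F, |((m' c : ℤ) : ℝ)| * H c) + (H a + H b) :=
            add_le_add (ih m' hN' hs') (hH a haF b hbF)
        _ = ∑ c ∈ F, |((m c : ℤ) : ℝ)| * H c := by
            rw [red_cost_sum F m a b haF hbF hab hma hmb H]; ring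

include hν0 hνs hνa in
lemma pairing2 (F : Finset A) (H : A → ℝ)
    (hH : ∀ a ∈ F, ∀ b ∈ F, ν (a - b) ≤ H a + H b)
    (hL : ∀ a ∈ F, ∀ b ∈ F, |H a - H b| ≤ ν (a - b))
    (a₀ : A) (ha₀ : a₀ ∈ F) :
    ∀ (N : ℕ) (m : A → ℤ), (∑ a ∈ F, (m a).natAbs) ≤ N → (∑ a ∈ F, m a) = 1 →
      H a₀ ≤ (∑ a ∈ F, |((m a : ℤ) : ℝ)| * H a) + ν (a₀ - ∑ a ∈ F, m a • a) := by
  intro N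
  induction N with
  | zero =>
    intro m hm hs
    exfalso
    have hz : ∀ c ∈ F, m c = 0 := by
      intro c hc
      have := Finset.sum_eq_zero_iff.1 (Nat.le_zero.1 hm) c hc
      omega
    rw [Finset.sum_eq_zero hz] at hs
    omega
  | succ N ih =>
    intro m hm hs
    by_cases h1 : ∑ c ∈ F, (m c).natAbs = 1
    · -- exactly one coordinate, equal to 1
      obtain ⟨c₀, hc₀F, hc₀⟩ : ∃ c ∈ F, m c ≠ 0 := by
        by_contra h
        push_neg at h
        rw [Finset.sum_eq_zero h] at hs
        omega
      have hrest : ∀ c ∈ F, c ≠ c₀ → m c = 0 := by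
        intro c hc hcc
        have hsplit : (m c₀).natAbs + ∑ x ∈ F.erase c₀, (m x).natAbs
            = ∑ x ∈ F, (m x).natAbs := Finset.add_sum_erase F (fun x => (m x).natAbs) hc₀F
        have h2 : 1 ≤ (m c₀).natAbs := by omega
        have h3 : ∑ x ∈ F.erase c₀, (m x).natAbs = 0 := by omega
        have := Finset.sum_eq_zero_iff.1 h3 c (Finset.mem_erase.2 ⟨hcc, hc⟩)
        omega
      have hmc₀ : m c₀ = 1 := by
        have : ∑ c ∈ F, m c = m c₀ := by
          rw [← Finset.add_sum_erase F m hc₀F, Finset.sum_eq_zero, add_zero]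
          intro c hc
          exact hrest c (Finset.mem_erase.1 hc).2 (Finset.mem_erase.1 hc).1
        omega
      have hsm : (∑ c ∈ F, m c • c) = c₀ := by
        rw [← Finset.add_sum_erase F _ hc₀F, Finset.sum_eq_zero, add_zero, hmc₀, one_smul]
        intro c hc
        rw [hrest c (Finset.mem_erase.1 hc).2 (Finset.mem_erase.1 hc).1, zero_smul]
      have hsc : (∑ c ∈ F, |((m c : ℤ) : ℝ)| * H c) = H c₀ := by
        rw [← Finset.add_sum_erase F _ hc₀F, Finset.sum_eq_zero, add_zero, hmc₀]
        · simp
        · intro c hc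
          rw [hrest c (Finset.mem_erase.1 hc).2 (Finset.mem_erase.1 hc).1]
          simp
      rw [hsm, hsc]
      have := hL a₀ ha₀ c₀ hc₀F
      have := abs_le.1 this
      linarith [this.1]
    · -- at least two units: find pos and neg
      have h0 : ¬ (∑ c ∈ F, (m c).natAbs = 0) := by
        intro h
        have hz : ∀ c ∈ F, m c = 0 := by
          intro c hc
          have := Finset.sum_eq_zero_iff.1 h c hc
          omega
        rw [Finset.sum_eq_zero hz] at hs
        exact absurd hs (by omega)
      have h2 : 2 ≤ ∑ c ∈ F, (m c).natAbs := by omega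
      have hbneg : ∃ b ∈ F, m b < 0 := by
        by_contra h
        push_neg at h
        have key : ((∑ c ∈ F, (m c).natAbs : ℕ) : ℤ) = ∑ c ∈ F, m c := by
          push_cast
          exact Finset.sum_congr rfl (fun c hc => abs_of_nonneg (h c hc))
        rw [hs] at key
        omega
      obtain ⟨b, hbF, hmb⟩ := hbneg
      have hapos : ∃ a ∈ F, 0 < m a := by
        by_contra h
        push_neg at h
        have : ∑ c ∈ F, m c ≤ 0 := Finset.sum_nonpos h
        omega
      obtain ⟨a, haF, hma⟩ := hapos
      have hab : a ≠ b := by intro h; rw [h] at hma; omega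
      set m' := red m a b with hm'
      have hs' : ∑ c ∈ F, m' c = 1 := by rw [red_int_sum F m a b haF hbF hab]; exact hs
      have hN' : (∑ c ∈ F, (m' c).natAbs) ≤ N := by
        have := red_natAbs_sum F m a b haF hbF hab hma hmb
        rw [← hm'] at this
        omega
      have key : a₀ - (∑ c ∈ F, m c • c) = (a₀ - ∑ c ∈ F, m' c • c) - (a - b) := by
        rw [red_smul_sum F m a b haF hbF hab]; abel
      have htri : ν (a₀ - ∑ c ∈ F, m' c • c) - ν (a - b) ≤ ν (a₀ - ∑ c ∈ F, m c • c) := by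
        rw [key]
        exact nu_sub_le ν hν0 hνs hνa _ _
      have hIH := ih m' hN' hs'
      have hcost := red_cost_sum F m a b haF hbF hab hma hmb H
      have hab2 := hH a haF b hbF
      linarith
end Pairing
end Ury
section GConstruction
open Finsupp

abbrev Zw : Type := ℕ →₀ ℤ

/-- supported below n -/
def InS (n : ℕ) (x : Zw) : Prop := ∀ i, n ≤ i → x i = 0

lemma InS.mono {m n : ℕ} (h : m ≤ n) {x : Zw} (hx : InS m x) : InS n x :=
  fun i hi => hx i (h.trans hi)

lemma InS.zero (n : ℕ) : InS n 0 := fun _ _ => rfl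

lemma InS.add {n : ℕ} {x y : Zw} (hx : InS n x) (hy : InS n y) : InS n (x + y) := by
  intro i hi
  rw [Finsupp.add_apply, hx i hi, hy i hi, add_zero]

lemma InS.neg {n : ℕ} {x : Zw} (hx : InS n x) : InS n (-x) := by
  intro i hi
  rw [Finsupp.neg_apply, hx i hi, neg_zero]

lemma InS.sub {n : ℕ} {x y : Zw} (hx : InS n x) (hy : InS n y) : InS n (x - y) := by
  rw [sub_eq_add_neg]; exact hx.add hy.neg

lemma InS.smul {n : ℕ} (k : ℤ) {x : Zw} (hx : InS n x) : InS n (k • x) := by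
  intro i hi
  rw [Finsupp.smul_apply, hx i hi, smul_zero]

lemma InS.sum {n : ℕ} (F : Finset Zw) (f : Zw → Zw) (hf : ∀ a ∈ F, InS n (f a)) :
    InS n (∑ a ∈ F, f a) := by
  classical
  induction F using Finset.induction_on with
  | empty => simpa using InS.zero n
  | @insert a s hnot ih =>
    rw [Finset.sum_insert hnot]
    exact (hf a (Finset.mem_insert_self a s)).add
      (ih fun b hb => hf b (Finset.mem_insert_of_mem hb))

lemma InS_zero_eq {x : Zw} (hx : InS 0 x) : x = 0 := by
  ext i; exact hx i (Nat.zero_le i)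

lemma InS_single (n : ℕ) : InS (n + 1) (Finsupp.single n (1:ℤ)) := by
  intro i hi
  rw [Finsupp.single_apply, if_neg (by omega)]

/-- the ℓ¹-mass of coordinates strictly above n -/
noncomputable def tl (n : ℕ) (x : Zw) : ℝ :=
  ∑ i ∈ x.support.filter (fun i => n < i), |((x i : ℤ) : ℝ)|

lemma tl_nonneg (n : ℕ) (x : Zw) : 0 ≤ tl n x :=
  Finset.sum_nonneg fun _ _ => abs_nonneg _

lemma tl_eq_sum_superset (n : ℕ) (x : Zw) (s : Finset ℕ) (hs : x.support ⊆ s) :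
    tl n x = ∑ i ∈ s.filter (fun i => n < i), |((x i : ℤ) : ℝ)| := by
  apply Finset.sum_subset (Finset.filter_subset_filter _ hs)
  intro i hi hni
  have : x i = 0 := by
    by_contra h
    exact hni (Finset.mem_filter.2 ⟨Finsupp.mem_support_iff.2 h, (Finset.mem_filter.1 hi).2⟩)
  rw [this]; simp

lemma tl_eq_zero {n : ℕ} {x : Zw} (hx : InS (n + 1) x) : tl n x = 0 := by
  apply Finset.sum_eq_zero
  intro i hi
  obtain ⟨his, hni⟩ := Finset.mem_filter.1 hi
  rw [hx i hni]
  simp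

lemma tl_neg (n : ℕ) (x : Zw) : tl n (-x) = tl n x := by
  unfold tl
  rw [Finsupp.support_neg]
  apply Finset.sum_congr rfl
  intro i _
  rw [Finsupp.neg_apply]
  push_cast
  rw [abs_neg]

lemma tl_add_le (n : ℕ) (x y : Zw) : tl n (x + y) ≤ tl n x + tl n y := by
  have hxy : (x + y).support ⊆ x.support ∪ y.support := Finsupp.support_add
  have hx : x.support ⊆ x.support ∪ y.support := Finset.subset_union_left
  have hy : y.support ⊆ x.support ∪ y.support := Finset.subset_union_right
  rw [tl_eq_sum_superset n (x+y) _ hxy, tl_eq_sum_superset n x _ hx,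
    tl_eq_sum_superset n y _ hy, ← Finset.sum_add_distrib]
  apply Finset.sum_le_sum
  intro i _
  rw [Finsupp.add_apply]
  push_cast
  exact abs_add_le _ _

/-- truncation: coordinates < n -/
noncomputable def trunc (n : ℕ) (x : Zw) : Zw := x.filter (fun i => i < n)

lemma trunc_apply (n : ℕ) (x : Zw) (i : ℕ) :
    trunc n x i = if i < n then x i else 0 := by
  classical
  simp [trunc, Finsupp.filter_apply]

lemma trunc_add (n : ℕ) (x y : Zw) : trunc n (x + y) = trunc n x + trunc n y := by
  ext i
  simp only [trunc_apply, Finsupp.add_apply]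
  split_ifs <;> simp

lemma trunc_neg (n : ℕ) (x : Zw) : trunc n (-x) = -(trunc n x) := by
  ext i
  simp only [trunc_apply, Finsupp.neg_apply]
  split_ifs <;> simp

lemma trunc_of_InS {n : ℕ} {x : Zw} (hx : InS n x) : trunc n x = x := by
  ext i
  rw [trunc_apply]
  split_ifs with h
  · rfl
  · exact (hx i (by omega)).symm

/-- norm axioms bundled -/
def IsNorm (ν : Zw → ℝ) : Prop :=
  ν 0 = 0 ∧ (∀ x, ν (-x) = ν x) ∧ (∀ x y, ν (x + y) ≤ ν x + ν y)

lemma IsNorm.nonneg {ν : Zw → ℝ} (h : IsNorm ν) (x : Zw) : 0 ≤ ν x :=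
  Ury.nu_nonneg ν h.1 h.2.1 h.2.2 x

/-- cost set of representations -/
def cSet (ν : Zw → ℝ) (Fs : Finset Zw) (H : Zw → ℝ) (n : ℕ) (x : Zw) : Set ℝ :=
  {c | ∃ m : Zw → ℤ, (∑ a ∈ Fs, m a) = x n ∧
    c = (∑ a ∈ Fs, |((m a : ℤ) : ℝ)| * H a) + ν (trunc n x + ∑ a ∈ Fs, m a • a)}

noncomputable def stepNu (ν : Zw → ℝ) (Fs : Finset Zw) (H : Zw → ℝ) (n : ℕ) (x : Zw) : ℝ :=
  sInf (cSet ν Fs H n x) + tl n x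

section StepLemmas
variable {ν : Zw → ℝ} {Fs : Finset Zw} {H : Zw → ℝ} {n : ℕ}
  (hν : IsNorm ν) (hFs : Fs.Nonempty)
  (hHpos : ∀ a ∈ Fs, 0 < H a)
  (hHsum : ∀ a ∈ Fs, ∀ b ∈ Fs, ν (a - b) ≤ H a + H b)
  (hHlip : ∀ a ∈ Fs, ∀ b ∈ Fs, |H a - H b| ≤ ν (a - b))

lemma sum_if_single {M : Type*} [AddCommMonoid M] (Fs : Finset Zw) (a₀ : Zw) (h : a₀ ∈ Fs)
    (f : Zw → M) : ∑ a ∈ Fs, (if a = a₀ then f a else 0) = f a₀ := by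
  classical
  rw [Finset.sum_ite_eq' Fs a₀ f]
  exact if_pos h

include hν hFs in
lemma cSet_nonempty (x : Zw) : (cSet ν Fs H n x).Nonempty := by
  classical
  obtain ⟨a₀, ha₀⟩ := hFs
  refine ⟨_, ⟨fun a => if a = a₀ then x n else 0, ?_, rfl⟩⟩
  rw [sum_if_single Fs a₀ ha₀ (fun _ => x n)]

include hν hHpos in
lemma cSet_nonneg {x : Zw} {c : ℝ} (hc : c ∈ cSet ν Fs H n x) : 0 ≤ c := by
  obtain ⟨m, _, rfl⟩ := hc
  have h1 : 0 ≤ ∑ a ∈ Fs, |((m a : ℤ) : ℝ)| * H a :=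
    Finset.sum_nonneg fun a ha => mul_nonneg (abs_nonneg _) (hHpos a ha).le
  linarith [hν.nonneg (trunc n x + ∑ a ∈ Fs, m a • a)]

include hν hHpos in
lemma cSet_bddBelow (x : Zw) : BddBelow (cSet ν Fs H n x) :=
  ⟨0, fun c hc => cSet_nonneg hν hHpos hc⟩

include hν hFs hHpos in
lemma stepNu_nonneg (x : Zw) : 0 ≤ stepNu ν Fs H n x := by
  have h1 : (0:ℝ) ≤ sInf (cSet ν Fs H n x) :=
    le_csInf (cSet_nonempty hν hFs x) (fun c hc => cSet_nonneg hν hHpos hc)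
  have h2 := tl_nonneg n x
  unfold stepNu; linarith

include hν hFs hHpos hHsum in
lemma stepNu_agree {x : Zw} (hx : InS n x) : stepNu ν Fs H n x = ν x := by
  classical
  have hxn : x n = 0 := hx n le_rfl
  have htr : trunc n x = x := trunc_of_InS hx
  have htl : tl n x = 0 := tl_eq_zero (hx.mono (Nat.le_succ n))
  unfold stepNu
  rw [htl, add_zero]
  apply le_antisymm
  · apply csInf_le (cSet_bddBelow hν hHpos x)
    refine ⟨fun _ => 0, by simp [hxn], ?_⟩
    simp [htr]
  · apply le_csInf (cSet_nonempty hν hFs x)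
    rintro c ⟨m, hm, rfl⟩
    rw [hxn] at hm
    have hP := Ury.pairing1 ν hν.1 hν.2.1 hν.2.2 Fs H hHsum
      (∑ a ∈ Fs, (m a).natAbs) m le_rfl hm
    have h2 : ν x ≤ ν (x + ∑ a ∈ Fs, m a • a) + ν (∑ a ∈ Fs, m a • a) := by
      have := hν.2.2 (x + ∑ a ∈ Fs, m a • a) (-(∑ a ∈ Fs, m a • a))
      rw [add_neg_cancel_right, hν.2.1] at this
      linarith
    rw [htr]
    linarith

include hν hFs hHpos hHsum hHlip in
lemma stepNu_realize {a₀ : Zw} (ha₀ : a₀ ∈ Fs) (hS : ∀ a ∈ Fs, InS n a) :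
    stepNu ν Fs H n (Finsupp.single n 1 - a₀) = H a₀ := by
  classical
  set x : Zw := Finsupp.single n 1 - a₀ with hxdef
  have hxn : x n = 1 := by
    rw [hxdef, Finsupp.sub_apply, Finsupp.single_eq_same, hS a₀ ha₀ n le_rfl, sub_zero]
  have htr : trunc n x = -a₀ := by
    ext i
    rw [trunc_apply, Finsupp.neg_apply]
    split_ifs with h
    · rw [hxdef, Finsupp.sub_apply, Finsupp.single_apply, if_neg (by omega), zero_sub]
    · rw [hS a₀ ha₀ i (by omega), neg_zero]
  have htl : tl n x = 0 := by
    apply tl_eq_zero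
    intro i hi
    rw [hxdef, Finsupp.sub_apply, Finsupp.single_apply, if_neg (by omega),
      hS a₀ ha₀ i (by omega), sub_zero]
  unfold stepNu
  rw [htl, add_zero]
  apply le_antisymm
  · apply csInf_le (cSet_bddBelow hν hHpos x)
    refine ⟨fun a => if a = a₀ then 1 else 0, ?_, ?_⟩
    · rw [sum_if_single Fs a₀ ha₀ (fun _ => (1:ℤ)), hxn]
    · have e1 : (∑ a ∈ Fs, |(((if a = a₀ then (1:ℤ) else 0) : ℤ) : ℝ)| * H a) = H a₀ := by
        have hc : ∀ a ∈ Fs, |(((if a = a₀ then (1:ℤ) else 0) : ℤ) : ℝ)| * H a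
            = (if a = a₀ then H a else 0) := by
          intro a _
          split_ifs <;> simp
        rw [Finset.sum_congr rfl hc, sum_if_single Fs a₀ ha₀ H]
      have e2 : (∑ a ∈ Fs, (if a = a₀ then (1:ℤ) else 0) • a) = a₀ := by
        have hc : ∀ a ∈ Fs, (if a = a₀ then (1:ℤ) else 0) • a = (if a = a₀ then a else 0) := by
          intro a _
          split_ifs <;> simp
        rw [Finset.sum_congr rfl hc, sum_if_single Fs a₀ ha₀ (fun a => a)]
      rw [e1, e2, htr, neg_add_cancel, hν.1, add_zero]
  · apply le_csInf (cSet_nonempty hν hFs x)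
    rintro c ⟨m, hm, rfl⟩
    rw [hxn] at hm
    have hP := Ury.pairing2 ν hν.1 hν.2.1 hν.2.2 Fs H hHsum hHlip a₀ ha₀
      (∑ a ∈ Fs, (m a).natAbs) m le_rfl hm
    have he : trunc n x + ∑ a ∈ Fs, m a • a = -(a₀ - ∑ a ∈ Fs, m a • a) := by
      rw [htr]; abel
    rw [he, hν.2.1]
    exact hP

include hν hFs hHpos in
lemma stepNu_zero : stepNu ν Fs H n 0 = 0 := by
  classical
  unfold stepNu
  have htl : tl n (0:Zw) = 0 := tl_eq_zero (InS.zero (n+1))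
  rw [htl, add_zero]
  apply le_antisymm
  · apply csInf_le (cSet_bddBelow hν hHpos 0)
    refine ⟨fun _ => 0, by simp, ?_⟩
    have : trunc n (0:Zw) = 0 := trunc_of_InS (InS.zero n)
    simp [this, hν.1]
  · exact le_csInf (cSet_nonempty hν hFs 0) (fun c hc => cSet_nonneg hν hHpos hc)

include hν in
lemma cSet_neg (x : Zw) : cSet ν Fs H n (-x) = cSet ν Fs H n x := by
  classical
  have key : ∀ y : Zw, ∀ c, c ∈ cSet ν Fs H n y → c ∈ cSet ν Fs H n (-y) := by
    rintro y c ⟨m, hm, rfl⟩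
    refine ⟨fun a => -(m a), ?_, ?_⟩
    · rw [Finsupp.neg_apply, ← hm, ← Finset.sum_neg_distrib]
    · congr 1
      · apply Finset.sum_congr rfl
        intro a _
        push_cast
        rw [abs_neg]
      · rw [← hν.2.1 (trunc n y + ∑ a ∈ Fs, m a • a)]
        congr 1
        rw [trunc_neg, neg_add, ← Finset.sum_neg_distrib]
        congr 1
        apply Finset.sum_congr rfl
        intro a _
        rw [neg_smul]
  apply Set.eq_of_subset_of_subset
  · intro c hc
    have := key (-x) c hc
    rwa [neg_neg] at this
  · intro c hc
    exact key x c hc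

include hν in
lemma stepNu_neg (x : Zw) : stepNu ν Fs H n (-x) = stepNu ν Fs H n x := by
  unfold stepNu
  rw [cSet_neg hν, tl_neg]

include hν hFs hHpos in
lemma stepNu_subadd (x y : Zw) :
    stepNu ν Fs H n (x + y) ≤ stepNu ν Fs H n x + stepNu ν Fs H n y := by
  classical
  apply le_of_forall_pos_le_add
  intro ε hε
  have hε2 : (0:ℝ) < ε / 2 := by linarith
  set ε2 := ε / 2 with hε2def
  have hεsum : ε2 + ε2 = ε := by rw [hε2def]; ring
  obtain ⟨c₁, hc₁, hc₁lt⟩ := (csInf_lt_iff (cSet_bddBelow hν hHpos x)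
    (cSet_nonempty hν hFs x)).1 (lt_add_of_pos_right _ hε2)
  obtain ⟨c₂, hc₂, hc₂lt⟩ := (csInf_lt_iff (cSet_bddBelow hν hHpos y)
    (cSet_nonempty hν hFs y)).1 (lt_add_of_pos_right _ hε2)
  obtain ⟨m₁, hm₁, rfl⟩ := hc₁
  obtain ⟨m₂, hm₂, rfl⟩ := hc₂
  have hmem : ((∑ a ∈ Fs, |(((m₁ a + m₂ a) : ℤ) : ℝ)| * H a)
      + ν (trunc n (x+y) + ∑ a ∈ Fs, (m₁ a + m₂ a) • a)) ∈ cSet ν Fs H n (x + y) := by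
    refine ⟨fun a => m₁ a + m₂ a, ?_, rfl⟩
    rw [Finset.sum_add_distrib, hm₁, hm₂, Finsupp.add_apply]
  have hkey := csInf_le (cSet_bddBelow hν hHpos (x+y)) hmem
  have hb1 : (∑ a ∈ Fs, |(((m₁ a + m₂ a) : ℤ) : ℝ)| * H a)
      ≤ (∑ a ∈ Fs, |((m₁ a : ℤ) : ℝ)| * H a) + (∑ a ∈ Fs, |((m₂ a : ℤ) : ℝ)| * H a) := by
    rw [← Finset.sum_add_distrib]
    apply Finset.sum_le_sum
    intro a ha
    rw [← add_mul]
    apply mul_le_mul_of_nonneg_right _ (hHpos a ha).le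
    push_cast
    exact abs_add_le _ _
  have hb2 : ν (trunc n (x+y) + ∑ a ∈ Fs, (m₁ a + m₂ a) • a)
      ≤ ν (trunc n x + ∑ a ∈ Fs, m₁ a • a) + ν (trunc n y + ∑ a ∈ Fs, m₂ a • a) := by
    have he : trunc n (x+y) + ∑ a ∈ Fs, (m₁ a + m₂ a) • a
        = (trunc n x + ∑ a ∈ Fs, m₁ a • a) + (trunc n y + ∑ a ∈ Fs, m₂ a • a) := by
      rw [trunc_add]
      have : ∑ a ∈ Fs, (m₁ a + m₂ a) • a
          = (∑ a ∈ Fs, m₁ a • a) + (∑ a ∈ Fs, m₂ a • a) := by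
        rw [← Finset.sum_add_distrib]
        exact Finset.sum_congr rfl (fun a _ => add_smul _ _ _)
      rw [this]
      abel
    rw [he]
    exact hν.2.2 _ _
  have htl := tl_add_le n x y
  unfold stepNu
  linarith

include hν hFs hHpos hHsum in
lemma stepNu_pos (hposν : ∀ y : Zw, y ≠ 0 → InS n y → 0 < ν y)
    {x : Zw} (hx : x ≠ 0) (hxS : InS (n+1) x) : 0 < stepNu ν Fs H n x := by
  classical
  by_cases hxn : x n = 0
  · have hxn' : InS n x := by
      intro i hi
      rcases Nat.eq_or_lt_of_le hi with h | h
      · rw [← h]; exact hxn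
      · exact hxS i h
    rw [stepNu_agree hν hFs hHpos hHsum hxn']
    exact hposν x hx hxn'
  · set δ := Fs.inf' hFs H with hδ
    have hδpos : 0 < δ := (Finset.lt_inf'_iff hFs).2 hHpos
    have hlow : ∀ c ∈ cSet ν Fs H n x, δ ≤ c := by
      rintro c ⟨m, hm, rfl⟩
      have h1 : δ ≤ ∑ a ∈ Fs, |((m a : ℤ) : ℝ)| * H a := by
        have e1 : ∀ a ∈ Fs, |((m a : ℤ) : ℝ)| * δ ≤ |((m a : ℤ) : ℝ)| * H a := by
          intro a ha
          exact mul_le_mul_of_nonneg_left (Finset.inf'_le H ha) (abs_nonneg _)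
        have e2 : (∑ a ∈ Fs, |((m a : ℤ) : ℝ)| * δ) ≤ ∑ a ∈ Fs, |((m a : ℤ) : ℝ)| * H a :=
          Finset.sum_le_sum e1
        have e3 : δ * |((x n : ℤ) : ℝ)| ≤ ∑ a ∈ Fs, |((m a : ℤ) : ℝ)| * δ := by
          rw [← Finset.sum_mul, mul_comm δ]
          apply mul_le_mul_of_nonneg_right _ hδpos.le
          calc |((x n : ℤ) : ℝ)| = |((∑ a ∈ Fs, m a : ℤ) : ℝ)| := by rw [hm]
            _ ≤ ∑ a ∈ Fs, |((m a : ℤ) : ℝ)| := by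
                push_cast
                exact Finset.abs_sum_le_sum_abs _ _
        have e4 : (1:ℝ) ≤ |((x n : ℤ) : ℝ)| := by
          have : (1:ℤ) ≤ |x n| := by rw [Int.abs_eq_natAbs]; omega
          calc (1:ℝ) ≤ ((|x n| : ℤ) : ℝ) := by exact_mod_cast this
            _ = |((x n : ℤ) : ℝ)| := by push_cast; rfl
        nlinarith
      linarith [hν.nonneg (trunc n x + ∑ a ∈ Fs, m a • a)]
    have : δ ≤ sInf (cSet ν Fs H n x) := le_csInf (cSet_nonempty hν hFs x) hlow
    have := tl_nonneg n x
    unfold stepNu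
    linarith

end StepLemmas
end GConstruction
section UTasks
open scoped Classical

abbrev UTask : Type := Finset Zw × (Zw →₀ ℚ) × ℚ

noncomputable def enum : ℕ → UTask :=
  fun n => (Classical.choose (exists_surjective_nat UTask)) n.unpair.2

lemma enum_hits (t : UTask) (n₀ : ℕ) : ∃ n, n₀ ≤ n ∧ enum n = t := by
  obtain ⟨k, hk⟩ := Classical.choose_spec (exists_surjective_nat UTask) t
  exact ⟨Nat.pair n₀ k, Nat.left_le_pair n₀ k, by simp [enum, Nat.unpair_pair, hk]⟩

/-- validity of a task at stage n with current norm ν -/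
def Valid (ν : Zw → ℝ) (t : UTask) (n : ℕ) : Prop :=
  t.1.Nonempty ∧ 0 < t.2.2 ∧ (∀ a ∈ t.1, InS n a) ∧ (∀ a ∈ t.1, 0 ≤ t.2.1 a) ∧
    (∀ a ∈ t.1, ∀ b ∈ t.1,
      |(t.2.1 a : ℝ) - (t.2.1 b : ℝ)| ≤ ν (a - b) + (t.2.2 : ℝ) ∧
      ν (a - b) ≤ (t.2.1 a : ℝ) + (t.2.1 b : ℝ) + (t.2.2 : ℝ))

noncomputable def selF (ν : Zw → ℝ) (n : ℕ) : Finset Zw :=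
  if Valid ν (enum n) n then (enum n).1 else {0}

noncomputable def selH (ν : Zw → ℝ) (n : ℕ) : Zw → ℝ :=
  if h : Valid ν (enum n) n then
    fun x => ((enum n).1.inf' h.1 fun b => ((enum n).2.1 b : ℝ) + ν (x - b)) + ((enum n).2.2 : ℝ)
  else fun _ => 1

section SelGood
variable {ν : Zw → ℝ} {n : ℕ} (hν : IsNorm ν)

include hν in
lemma repair_facts (h : Valid ν (enum n) n) :
    (∀ a ∈ (enum n).1, ((enum n).2.1 a : ℝ) ≤ selH ν n a) ∧
    (∀ a ∈ (enum n).1, selH ν n a ≤ ((enum n).2.1 a : ℝ) + ((enum n).2.2 : ℝ)) ∧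
    (∀ a ∈ (enum n).1, 0 < selH ν n a) ∧
    (∀ a ∈ (enum n).1, ∀ b ∈ (enum n).1, ν (a - b) ≤ selH ν n a + selH ν n b) ∧
    (∀ a ∈ (enum n).1, ∀ b ∈ (enum n).1, |selH ν n a - selH ν n b| ≤ ν (a - b)) := by
  obtain ⟨hne, hε, hS, hq0, hadm⟩ := h
  set F := (enum n).1
  set q := (enum n).2.1
  set ε := (enum n).2.2
  have hεR : (0:ℝ) < (ε:ℝ) := by exact_mod_cast hε
  set hh : Zw → ℝ := fun x => F.inf' hne fun b => ((q b : ℝ) + ν (x - b)) with hhdef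
  have hselH : selH ν n = fun x => hh x + (ε:ℝ) := by
    rw [selH, dif_pos ⟨hne, hε, hS, hq0, hadm⟩]
  have hle : ∀ a ∈ F, hh a ≤ (q a : ℝ) := by
    intro a ha
    have := Finset.inf'_le (fun b => ((q b : ℝ) + ν (a - b))) ha
    rw [sub_self, hν.1, add_zero] at this
    exact this
  have hge : ∀ a ∈ F, (q a : ℝ) - (ε:ℝ) ≤ hh a := by
    intro a ha
    apply Finset.le_inf'
    intro b hb
    have := (hadm a ha b hb).1
    have h2 := abs_le.1 this
    linarith [h2.1]
  have hnn : ∀ x : Zw, 0 ≤ hh x := by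
    intro x
    apply Finset.le_inf'
    intro b hb
    have h1 : (0:ℝ) ≤ (q b : ℝ) := by exact_mod_cast hq0 b hb
    linarith [hν.nonneg (x - b)]
  have hlip : ∀ x y : Zw, hh x ≤ hh y + ν (x - y) := by
    intro x y
    obtain ⟨b, hb, hbeq⟩ := Finset.exists_mem_eq_inf' hne (fun b => ((q b : ℝ) + ν (y - b)))
    have h1 : hh x ≤ (q b : ℝ) + ν (x - b) :=
      Finset.inf'_le (fun b => ((q b : ℝ) + ν (x - b))) hb
    have h2 : ν (x - b) ≤ ν (x - y) + ν (y - b) := by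
      have := hν.2.2 (x - y) (y - b)
      rw [sub_add_sub_cancel] at this
      exact this
    have h3 : hh y = (q b : ℝ) + ν (y - b) := hbeq
    linarith
  refine ⟨?_, ?_, ?_, ?_, ?_⟩
  · intro a ha; rw [hselH]; have := hge a ha; simp only; linarith
  · intro a ha; rw [hselH]; have := hle a ha; simp only; linarith
  · intro a ha; rw [hselH]; have := hnn a; simp only; linarith
  · intro a ha b hb
    rw [hselH]
    simp only
    obtain ⟨c, hc, hceq⟩ := Finset.exists_mem_eq_inf' hne (fun d => ((q d : ℝ) + ν (a - d)))
    obtain ⟨c', hc', hceq'⟩ := Finset.exists_mem_eq_inf' hne (fun d => ((q d : ℝ) + ν (b - d)))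
    have h1 : ν (a - b) ≤ ν (a - c) + ν (c - c') + ν (b - c') := by
      have e1 : ν (a - b) ≤ ν (a - c') + ν (c' - b) := by
        have := hν.2.2 (a - c') (c' - b); rw [sub_add_sub_cancel] at this; exact this
      have e2 : ν (a - c') ≤ ν (a - c) + ν (c - c') := by
        have := hν.2.2 (a - c) (c - c'); rw [sub_add_sub_cancel] at this; exact this
      have e3 : ν (c' - b) = ν (b - c') := by
        rw [← hν.2.1 (b - c'), neg_sub]
      linarith
    have h2 : ν (c - c') ≤ (q c : ℝ) + (q c' : ℝ) + (ε:ℝ) := (hadm c hc c' hc').2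
    have h3 : hh a = (q c : ℝ) + ν (a - c) := hceq
    have h4 : hh b = (q c' : ℝ) + ν (b - c') := hceq'
    linarith
  · intro a ha b hb
    rw [hselH]
    simp only
    rw [abs_le]
    constructor
    · have := hlip b a
      have e : ν (b - a) = ν (a - b) := by rw [← hν.2.1 (a-b), neg_sub]
      linarith
    · have := hlip a b
      linarith

include hν in
lemma sel_good :
    (selF ν n).Nonempty ∧ (∀ a ∈ selF ν n, InS n a) ∧
    (∀ a ∈ selF ν n, 0 < selH ν n a) ∧
    (∀ a ∈ selF ν n, ∀ b ∈ selF ν n, ν (a - b) ≤ selH ν n a + selH ν n b) ∧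
    (∀ a ∈ selF ν n, ∀ b ∈ selF ν n, |selH ν n a - selH ν n b| ≤ ν (a - b)) := by
  by_cases h : Valid ν (enum n) n
  · have hF : selF ν n = (enum n).1 := by rw [selF, if_pos h]
    obtain ⟨h1, h2, h3, h4, h5⟩ := repair_facts hν h
    rw [hF]
    exact ⟨h.1, h.2.2.1, h3, h4, h5⟩
  · have hF : selF ν n = {0} := by rw [selF, if_neg h]
    have hH : selH ν n = fun _ => 1 := by rw [selH, dif_neg h]
    rw [hF, hH]
    refine ⟨⟨0, Finset.mem_singleton_self 0⟩, ?_, ?_, ?_, ?_⟩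
    · intro a ha; rw [Finset.mem_singleton.1 ha]; exact InS.zero n
    · intro a _; norm_num
    · intro a ha b hb
      rw [Finset.mem_singleton.1 ha, Finset.mem_singleton.1 hb, sub_self (0:Zw), hν.1]
      norm_num
    · intro a ha b hb
      rw [Finset.mem_singleton.1 ha, Finset.mem_singleton.1 hb, sub_self (0:Zw), hν.1]
      norm_num
end SelGood

noncomputable def nuF : ℕ → Zw → ℝ
  | 0 => fun _ => 0
  | n + 1 => stepNu (nuF n) (selF (nuF n) n) (selH (nuF n) n) n

lemma nuF_invariant : ∀ n, IsNorm (nuF n) ∧ (∀ x : Zw, x ≠ 0 → InS n x → 0 < nuF n x) := by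
  intro n
  induction n with
  | zero =>
    refine ⟨⟨rfl, fun _ => rfl, fun _ _ => by simp [nuF]⟩, ?_⟩
    intro x hx hS
    exact absurd (InS_zero_eq hS) hx
  | succ n ih =>
    obtain ⟨hN, hP⟩ := ih
    obtain ⟨g1, g2, g3, g4, g5⟩ := sel_good (n := n) hN
    constructor
    · refine ⟨?_, ?_, ?_⟩
      · exact stepNu_zero hN g1 g3
      · intro x
        exact stepNu_neg hN x
      · intro x y
        exact stepNu_subadd hN g1 g3 x y
    · intro x hx hS
      exact stepNu_pos hN g1 g3 g4 hP hx hS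

lemma nuF_norm (n : ℕ) : IsNorm (nuF n) := (nuF_invariant n).1

lemma nuF_succ_agree (n : ℕ) {x : Zw} (hx : InS n x) : nuF (n + 1) x = nuF n x := by
  obtain ⟨g1, _, g3, g4, _⟩ := sel_good (n := n) (nuF_norm n)
  exact stepNu_agree (nuF_norm n) g1 g3 g4 hx

lemma nuF_stable : ∀ {m n : ℕ} {x : Zw}, m ≤ n → InS m x → nuF n x = nuF m x := by
  intro m n
  induction n with
  | zero => intro x h _; rw [Nat.le_zero.1 h]
  | succ n ih =>
    intro x h hx
    rcases Nat.eq_or_lt_of_le h with h' | h'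
    · rw [h']
    · have hmn : m ≤ n := by omega
      rw [nuF_succ_agree n (hx.mono hmn), ih hmn hx]

def bnd (x : Zw) : ℕ := x.support.sup id + 1

lemma InS_bnd (x : Zw) : InS (bnd x) x := by
  intro i hi
  by_contra h
  have : i ∈ x.support := Finsupp.mem_support_iff.2 h
  have := Finset.le_sup (f := id) this
  simp only [id] at this
  unfold bnd at hi
  omega

noncomputable def nuG (x : Zw) : ℝ := nuF (bnd x) x

lemma nuG_eq {n : ℕ} {x : Zw} (hx : InS n x) : nuG x = nuF n x := by
  rcases le_total n (bnd x) with h | h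
  · exact nuF_stable h hx
  · exact (nuF_stable h (InS_bnd x)).symm

lemma nuG_zero : nuG 0 = 0 := by
  rw [nuG_eq (InS.zero 0)]
  rfl

lemma nuG_neg (x : Zw) : nuG (-x) = nuG x := by
  set N := max (bnd x) (bnd (-x)) with hN
  rw [nuG_eq ((InS_bnd (-x)).mono (le_max_right _ _)),
    nuG_eq ((InS_bnd x).mono (le_max_left _ _))]
  exact (nuF_norm N).2.1 x

lemma nuG_subadd (x y : Zw) : nuG (x + y) ≤ nuG x + nuG y := by
  set N := max (max (bnd x) (bnd y)) (bnd (x + y)) with hN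
  rw [nuG_eq ((InS_bnd (x+y)).mono (le_max_right _ _)),
    nuG_eq ((InS_bnd x).mono ((le_max_left _ _).trans (le_max_left _ _))),
    nuG_eq ((InS_bnd y).mono ((le_max_right _ _).trans (le_max_left _ _)))]
  exact (nuF_norm N).2.2 x y

lemma nuG_nonneg (x : Zw) : 0 ≤ nuG x :=
  (nuF_norm (bnd x)).nonneg x

lemma nuG_pos {x : Zw} (hx : x ≠ 0) : 0 < nuG x :=
  (nuF_invariant (bnd x)).2 x hx (InS_bnd x)

/-- main realization property of nuG -/
lemma nuG_task (F : Finset Zw) (q : Zw →₀ ℚ) (ε : ℚ) (hne : F.Nonempty) (hε : 0 < ε)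
    (hq0 : ∀ a ∈ F, 0 ≤ q a)
    (hadm : ∀ a ∈ F, ∀ b ∈ F,
      |(q a : ℝ) - (q b : ℝ)| ≤ nuG (a - b) + (ε:ℝ) ∧
      nuG (a - b) ≤ (q a : ℝ) + (q b : ℝ) + (ε:ℝ)) :
    ∃ z : Zw, ∀ a ∈ F, (q a : ℝ) ≤ nuG (z - a) ∧ nuG (z - a) ≤ (q a : ℝ) + (ε:ℝ) := by
  classical
  set n₀ := F.sup bnd with hn₀
  have hS₀ : ∀ a ∈ F, InS n₀ a := fun a ha => (InS_bnd a).mono (Finset.le_sup ha)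
  obtain ⟨n, hn, henum⟩ := enum_hits (F, q, ε) n₀
  have hS : ∀ a ∈ F, InS n a := fun a ha => (hS₀ a ha).mono hn
  have hagree : ∀ a ∈ F, ∀ b ∈ F, nuF n (a - b) = nuG (a - b) := by
    intro a ha b hb
    exact (nuG_eq ((hS a ha).sub (hS b hb))).symm
  have hvalid : Valid (nuF n) (enum n) n := by
    rw [henum]
    refine ⟨hne, hε, hS, hq0, ?_⟩
    intro a ha b hb
    rw [show (nuF n) (a-b) = nuG (a-b) from hagree a ha b hb]
    exact hadm a ha b hb
  obtain ⟨hb1, hb2, _, _, _⟩ := repair_facts (nuF_norm n) hvalid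
  obtain ⟨g1, g2, g3, g4, g5⟩ := sel_good (n := n) (nuF_norm n)
  have hFsel : selF (nuF n) n = F := by
    rw [selF, if_pos hvalid, henum]
  refine ⟨Finsupp.single n 1, ?_⟩
  intro a ha
  have haSel : a ∈ selF (nuF n) n := by rw [hFsel]; exact ha
  have hreal : nuF (n+1) (Finsupp.single n 1 - a) = selH (nuF n) n a := by
    show stepNu (nuF n) (selF (nuF n) n) (selH (nuF n) n) n _ = _
    exact stepNu_realize (nuF_norm n) g1 g3 g4 g5 haSel g2
  have hz : InS (n+1) (Finsupp.single n 1 - a) :=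
    (InS_single n).sub ((hS a ha).mono (Nat.le_succ n))
  rw [nuG_eq hz, hreal]
  have ha' : a ∈ (enum n).1 := by rw [henum]; exact ha
  have e1 := hb1 a ha'
  have e2 := hb2 a ha'
  rw [henum] at e1 e2
  exact ⟨e1, e2⟩
end UTasks
section Space
open UniformSpace

noncomputable instance : MetricSpace Zw where
  dist x y := nuG (x - y)
  dist_self x := by show nuG (x - x) = 0; rw [sub_self, nuG_zero]
  dist_comm x y := by show nuG (x - y) = nuG (y - x); rw [← nuG_neg (x - y), neg_sub]
  dist_triangle x y z := by
    show nuG (x - z) ≤ nuG (x - y) + nuG (y - z)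
    have h : x - z = (x - y) + (y - z) := by abel
    rw [h]; exact nuG_subadd _ _
  eq_of_dist_eq_zero := by
    intro x y h
    by_contra hne
    have : x - y ≠ 0 := sub_ne_zero.2 hne
    exact absurd h (ne_of_gt (nuG_pos this))

lemma Zw.dist_def (x y : Zw) : dist x y = nuG (x - y) := rfl

instance : IsUniformAddGroup Zw := by
  constructor
  rw [Metric.uniformContinuous_iff]
  intro ε hε
  refine ⟨ε / 2, by linarith, ?_⟩
  intro a b h
  rw [Prod.dist_eq] at h
  have h1 : dist a.1 b.1 < ε / 2 := lt_of_le_of_lt (le_max_left _ _) h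
  have h2 : dist a.2 b.2 < ε / 2 := lt_of_le_of_lt (le_max_right _ _) h
  have key : dist (a.1 - a.2) (b.1 - b.2) ≤ dist a.1 b.1 + dist a.2 b.2 := by
    show nuG ((a.1 - a.2) - (b.1 - b.2)) ≤ nuG (a.1 - b.1) + nuG (a.2 - b.2)
    have e : (a.1 - a.2) - (b.1 - b.2) = (a.1 - b.1) + (-(a.2 - b.2)) := by abel
    rw [e]
    exact (nuG_subadd _ _).trans (by rw [nuG_neg])
  linarith

/-- the completed Urysohn group -/
noncomputable abbrev UY : Type := Completion Zw

lemma UY.nonempty : Nonempty UY := ⟨((0 : Zw) : UY)⟩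

lemma UY.dist_coe (a b : Zw) : dist (a : UY) (b : UY) = dist a b := Completion.dist_eq a b

/-- translation invariance of the metric on UY -/
lemma UY.dist_add_right (p q z : UY) : dist (p + z) (q + z) = dist p q := by
  refine Completion.induction_on₃ p q z ?_ ?_
  · apply isClosed_eq
    · exact (continuous_fst.add continuous_snd.snd).dist (continuous_snd.fst.add continuous_snd.snd)
    · exact continuous_fst.dist continuous_snd.fst
  · intro a b c
    rw [← Completion.coe_add, ← Completion.coe_add, UY.dist_coe, UY.dist_coe]
    show nuG ((a + c) - (b + c)) = nuG (a - b)
    congr 1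
    abel

/-- extension property (as in IsUrysohn) -/
def ExtProp (W : Type*) [MetricSpace W] : Prop :=
  ∀ (A : Finset W) (g : W → ℝ),
    (∀ a ∈ A, 0 ≤ g a) →
    (∀ a ∈ A, ∀ b ∈ A, |g a - g b| ≤ dist a b ∧ dist a b ≤ g a + g b) →
    ∃ z : W, ∀ a ∈ A, dist z a = g a

/-- approximate realization in Zw, with slack in admissibility -/
lemma Zw_approx (A : Finset Zw) (g : Zw → ℝ) (δ : ℝ) (hδ : 0 < δ)
    (hg0 : ∀ a ∈ A, 0 ≤ g a)
    (hlip : ∀ a ∈ A, ∀ b ∈ A, |g a - g b| ≤ dist a b + 2*δ)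
    (hsum : ∀ a ∈ A, ∀ b ∈ A, dist a b ≤ g a + g b + 2*δ) :
    ∃ z : Zw, ∀ a ∈ A, g a ≤ dist z a ∧ dist z a ≤ g a + 5*δ := by
  classical
  rcases A.eq_empty_or_nonempty with rfl | hne
  · exact ⟨0, by simp⟩
  -- rational δ' ∈ (3δ, 4δ) and rational values q a ∈ (g a, g a + δ)
  obtain ⟨εq, hεq1, hεq2⟩ := exists_rat_btwn (by linarith : (3*δ : ℝ) < 4*δ)
  have hεqpos : 0 < εq := by
    have : (0:ℝ) < (εq:ℝ) := by linarith
    exact_mod_cast this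
  have hryt : ∀ a : Zw, ∃ r : ℚ, g a < r ∧ (r:ℝ) < g a + δ :=
    fun a => exists_rat_btwn (by linarith)
  set qf : Zw → ℚ := fun a => Classical.choose (hryt a) with hqf
  have hqf1 : ∀ a : Zw, g a < qf a := fun a => (Classical.choose_spec (hryt a)).1
  have hqf2 : ∀ a : Zw, (qf a : ℝ) < g a + δ := fun a => (Classical.choose_spec (hryt a)).2
  set q : Zw →₀ ℚ := ∑ a ∈ A, Finsupp.single a (qf a) with hq
  have hqval : ∀ a ∈ A, q a = qf a := by
    intro a ha
    rw [hq]
    rw [Finsupp.finset_sum_apply]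
    calc ∑ i ∈ A, (Finsupp.single i (qf i)) a
        = ∑ i ∈ A, (if i = a then qf i else 0) :=
          Finset.sum_congr rfl (fun b _ => Finsupp.single_apply)
      _ = qf a := by
          have := sum_if_single (M := ℚ) A a ha (fun b => qf b)
          simpa using this
  have main := nuG_task A q εq hne hεqpos ?_ ?_
  · obtain ⟨z, hz⟩ := main
    refine ⟨z, ?_⟩
    intro a ha
    obtain ⟨h1, h2⟩ := hz a ha
    rw [hqval a ha] at h1 h2
    have e1 := hqf1 a
    have e2 := hqf2 a
    rw [Zw.dist_def]
    constructor
    · linarith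
    · linarith
  · intro a ha
    rw [hqval a ha]
    have := hqf1 a
    have h0 := hg0 a ha
    have : (0:ℝ) < qf a := by linarith
    exact_mod_cast this.le
  · intro a ha b hb
    rw [hqval a ha, hqval b hb]
    have e1 := hqf1 a
    have e2 := hqf2 a
    have e3 := hqf1 b
    have e4 := hqf2 b
    have l1 := hlip a ha b hb
    have l2 := hsum a ha b hb
    have habs := abs_le.1 l1
    rw [Zw.dist_def] at l1 l2 habs
    constructor
    · rw [abs_le]
      constructor <;> [skip; skip] <;>
      · push_cast
        nlinarith [habs.1, habs.2]
    · push_cast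
      nlinarith
section UYprops
open UniformSpace

noncomputable instance : Inhabited UY := ⟨((0 : Zw) : UY)⟩

lemma UY_approx (A : Finset UY) (g : UY → ℝ)
    (hg0 : ∀ a ∈ A, 0 ≤ g a)
    (hadm : ∀ a ∈ A, ∀ b ∈ A, |g a - g b| ≤ dist a b ∧ dist a b ≤ g a + g b)
    (ε : ℝ) (hε : 0 < ε) :
    ∃ z : UY, ∀ a ∈ A, |dist z a - g a| ≤ ε := by
  classical
  set δ := ε / 8 with hδdef
  have hδ : 0 < δ := by rw [hδdef]; linarith
  have hex : ∀ a : UY, ∃ x : Zw, dist a (x : UY) < δ :=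
    fun a => Completion.denseRange_coe.exists_dist_lt a hδ
  set γ : UY → Zw := fun a => Classical.choose (hex a) with hγ
  have hγs : ∀ a : UY, dist a ((γ a : Zw) : UY) < δ := fun a => Classical.choose_spec (hex a)
  set F : Finset Zw := A.image γ with hF
  set w : Zw → UY := fun x => if h : ∃ a ∈ A, γ a = x then Classical.choose h else default
    with hw
  have hwmem : ∀ x : Zw, (∃ a ∈ A, γ a = x) → w x ∈ A ∧ γ (w x) = x := by
    intro x hx
    rw [hw]
    simp only [dif_pos hx]
    exact ⟨(Classical.choose_spec hx).1, (Classical.choose_spec hx).2⟩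
  set g' : Zw → ℝ := fun x => g (w x) with hg'
  have hwd : ∀ x ∈ F, dist ((x : Zw) : UY) (w x) < δ := by
    intro x hx
    obtain ⟨hw1, hw2⟩ := hwmem x (by simpa [hF, Finset.mem_image] using hx)
    have := hγs (w x)
    rw [hw2] at this
    rw [dist_comm]
    exact this
  have hFmem : ∀ x ∈ F, w x ∈ A := by
    intro x hx
    exact (hwmem x (by simpa [hF, Finset.mem_image] using hx)).1
  obtain ⟨z, hz⟩ := Zw_approx F g' δ hδ
    (fun x hx => hg0 _ (hFmem x hx))
    (by
      intro x hx y hy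
      have h1 := (hadm _ (hFmem x hx) _ (hFmem y hy)).1
      have h2 : dist (w x) (w y) ≤ dist ((x:Zw) : UY) ((y:Zw) : UY) + 2*δ := by
        have t1 := hwd x hx
        have t2 := hwd y hy
        have := dist_triangle4 (w x) ((x:Zw):UY) ((y:Zw):UY) (w y)
        rw [dist_comm ((x:Zw):UY) (w x)] at t1
        linarith [dist_comm ((y:Zw):UY) (w y) ▸ t2]
      have h3 : dist ((x:Zw) : UY) ((y:Zw) : UY) = dist x y := UY.dist_coe x y
      rw [h3] at h2
      calc |g' x - g' y| ≤ dist (w x) (w y) := h1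
        _ ≤ dist x y + 2*δ := h2)
    (by
      intro x hx y hy
      have h1 := (hadm _ (hFmem x hx) _ (hFmem y hy)).2
      have h2 : dist ((x:Zw) : UY) ((y:Zw) : UY) ≤ dist (w x) (w y) + 2*δ := by
        have t1 := hwd x hx
        have t2 := hwd y hy
        have := dist_triangle4 ((x:Zw):UY) (w x) (w y) ((y:Zw):UY)
        linarith [dist_comm (w y) ((y:Zw):UY) ▸ t2]
      have h3 : dist ((x:Zw) : UY) ((y:Zw) : UY) = dist x y := UY.dist_coe x y
      rw [h3] at h2
      calc dist x y ≤ dist (w x) (w y) + 2*δ := h2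
        _ ≤ g' x + g' y + 2*δ := by linarith)
  refine ⟨((z : Zw) : UY), ?_⟩
  intro a ha
  have hxF : γ a ∈ F := Finset.mem_image_of_mem γ ha
  obtain ⟨h1, h2⟩ := hz (γ a) hxF
  -- g' (γ a) close to g a
  have hwa : dist (w (γ a)) a < 2*δ := by
    have t1 := hwd (γ a) hxF
    have t2 := hγs a
    have := dist_triangle (w (γ a)) ((γ a : Zw) : UY) a
    rw [dist_comm ((γ a : Zw):UY) (w (γ a))] at t1
    rw [dist_comm a ((γ a : Zw):UY)] at t2
    linarith
  have hga : |g' (γ a) - g a| ≤ 2*δ := by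
    have hmem := hFmem (γ a) hxF
    have := (hadm _ hmem _ ha).1
    linarith
  have hdd : |dist ((z:Zw) : UY) a - dist z (γ a)| ≤ δ := by
    have h3 : dist ((z:Zw) : UY) ((γ a : Zw) : UY) = dist z (γ a) := UY.dist_coe z (γ a)
    have h4 := abs_dist_sub_le a ((γ a : Zw):UY) ((z:Zw):UY)
    rw [dist_comm a ((z:Zw):UY), dist_comm ((γ a : Zw):UY) ((z:Zw):UY), h3] at h4
    have t2 := hγs a
    linarith [h4]
  have habs2 : |dist z (γ a) - g' (γ a)| ≤ 5*δ := by
    rw [abs_le]; constructor <;> linarith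
  calc |dist ((z:Zw) : UY) a - g a|
      ≤ |dist ((z:Zw) : UY) a - dist z (γ a)| + |dist z (γ a) - g' (γ a)|
        + |g' (γ a) - g a| := by
        have := abs_sub_le (dist ((z:Zw) : UY) a) (dist z (γ a)) (g' (γ a))
        have := abs_sub_le (dist ((z:Zw) : UY) a) (g' (γ a)) (g a)
        have h4 := abs_sub_le (dist ((z:Zw):UY) a) (dist z (γ a)) (g a)
        have h5 := abs_sub_le (dist z (γ a)) (g' (γ a)) (g a)
        linarith
    _ ≤ δ + 5*δ + 2*δ := by linarith [hdd, habs2, hga]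
    _ = ε := by rw [hδdef]; ring

lemma UY_step (A : Finset UY) (g : UY → ℝ)
    (hg0 : ∀ a ∈ A, 0 ≤ g a)
    (hadm : ∀ a ∈ A, ∀ b ∈ A, |g a - g b| ≤ dist a b ∧ dist a b ≤ g a + g b)
    (ek ek1 : ℝ) (hk : 0 < ek) (hk1 : 0 < ek1)
    (z : UY) (hQ : ∀ a ∈ A, |dist z a - g a| ≤ ek) :
    ∃ z' : UY, (∀ a ∈ A, |dist z' a - g a| ≤ ek1) ∧ dist z' z ≤ ek + 2 * ek1 := by
  classical
  by_cases hzA : z ∈ A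
  · obtain ⟨z', hz'⟩ := UY_approx A g hg0 hadm ek1 hk1
    refine ⟨z', hz', ?_⟩
    have h1 := hz' z hzA
    have h2 := hQ z hzA
    rw [dist_self] at h2
    have h2' := abs_le.1 h2
    have h1' := abs_le.1 h1
    linarith [h1'.2, h2'.2]
  · set A' : Finset UY := insert z A with hA'
    set g1 : UY → ℝ := fun y => if y = z then ek + ek1 else g y with hg1
    have hg1A : ∀ a ∈ A, g1 a = g a := by
      intro a ha
      rw [hg1]
      simp only
      rw [if_neg (by rintro rfl; exact hzA ha)]
    have hg1z : g1 z = ek + ek1 := by rw [hg1]; simp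
    have hg10 : ∀ b ∈ A', 0 ≤ g1 b := by
      intro b hb
      rcases Finset.mem_insert.1 hb with rfl | hb
      · rw [hg1z]; linarith
      · rw [hg1A b hb]; exact hg0 b hb
    have hC : ∀ b ∈ A', ∀ c ∈ A', dist b c ≤ g1 b + g1 c := by
      intro b hb c hc
      rcases Finset.mem_insert.1 hb with hbz | hbA
      · rcases Finset.mem_insert.1 hc with hcz | hcA
        · subst hbz; subst hcz
          rw [dist_self, hg1z]
          linarith
        · subst hbz
          rw [hg1z, hg1A c hcA]
          have := abs_le.1 (hQ c hcA)
          linarith [this.2]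
      · rcases Finset.mem_insert.1 hc with hcz | hcA
        · subst hcz
          rw [hg1z, hg1A b hbA]
          have := abs_le.1 (hQ b hbA)
          rw [dist_comm]
          linarith [this.2]
        · rw [hg1A b hbA, hg1A c hcA]
          exact (hadm b hbA c hcA).2
    have hne' : A'.Nonempty := ⟨z, Finset.mem_insert_self z A⟩
    set h : UY → ℝ := fun x => A'.inf' hne' (fun b => g1 b + dist x b) with hhd
    have h0 : ∀ x, 0 ≤ h x := by
      intro x
      apply Finset.le_inf'
      intro b hb
      have := hg10 b hb
      linarith [dist_nonneg (x := x) (y := b)]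
    have hlip : ∀ x y : UY, h x ≤ h y + dist x y := by
      intro x y
      obtain ⟨b, hb, hbeq⟩ := Finset.exists_mem_eq_inf' hne' (fun b => g1 b + dist y b)
      have h1 : h x ≤ g1 b + dist x b := Finset.inf'_le _ hb
      have h2 : dist x b ≤ dist x y + dist y b := dist_triangle x y b
      have h3 : h y = g1 b + dist y b := hbeq
      calc h x ≤ g1 b + dist x b := h1
        _ ≤ g1 b + (dist x y + dist y b) := by linarith
        _ = h y + dist x y := by rw [h3]; ring
    have habs : ∀ x y : UY, |h x - h y| ≤ dist x y := by
      intro x y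
      rw [abs_le]
      constructor
      · have := hlip y x
        rw [dist_comm y x] at this
        linarith
      · have := hlip x y
        linarith
    have hsum : ∀ x y : UY, dist x y ≤ h x + h y := by
      intro x y
      obtain ⟨b, hb, hbeq⟩ := Finset.exists_mem_eq_inf' hne' (fun c => g1 c + dist x c)
      obtain ⟨c, hc, hceq⟩ := Finset.exists_mem_eq_inf' hne' (fun d => g1 d + dist y d)
      have h1 : dist x y ≤ dist x b + dist b c + dist c y := dist_triangle4 x b c y
      have h2 := hC b hb c hc
      have e1 : h x = g1 b + dist x b := hbeq
      have e2 : h y = g1 c + dist y c := hceq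
      rw [dist_comm c y] at h1
      linarith
    have hA : ∀ a ∈ A, h a = g a := by
      intro a ha
      apply le_antisymm
      · have h5 : h a ≤ g1 a + dist a a :=
          Finset.inf'_le (fun b => g1 b + dist a b) (Finset.mem_insert_of_mem ha)
        rw [dist_self, add_zero, hg1A a ha] at h5
        exact h5
      · apply Finset.le_inf'
        intro b hb
        rcases Finset.mem_insert.1 hb with rfl | hb
        · rw [hg1z]
          have := abs_le.1 (hQ a ha)
          rw [dist_comm]
          linarith [this.1]
        · rw [hg1A b hb]
          have := abs_le.1 (hadm a ha b hb).1
          linarith [this.1]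
    have hzle : h z ≤ ek + ek1 := by
      have h6 : h z ≤ g1 z + dist z z :=
        Finset.inf'_le (fun b => g1 b + dist z b) (Finset.mem_insert_self z A)
      rw [dist_self, add_zero, hg1z] at h6
      exact h6
    obtain ⟨z', hz'⟩ := UY_approx A' h (fun b _ => h0 b)
      (fun b _ c _ => ⟨habs b c, hsum b c⟩) ek1 hk1
    refine ⟨z', ?_, ?_⟩
    · intro a ha
      have := hz' a (Finset.mem_insert_of_mem ha)
      rw [hA a ha] at this
      exact this
    · have := abs_le.1 (hz' z (Finset.mem_insert_self z A))
      linarith [this.2]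

lemma UY_ext : ExtProp UY := by
  classical
  intro A g hg0 hadm
  set e : ℕ → ℝ := fun k => (1/2)^k with he
  have hepos : ∀ k, 0 < e k := fun k => by positivity
  have h0 : ∃ z0 : UY, ∀ a ∈ A, |dist z0 a - g a| ≤ e 0 := by
    have := UY_approx A g hg0 hadm (e 0) (hepos 0)
    exact this
  have hstep : ∀ k (z : UY), (∀ a ∈ A, |dist z a - g a| ≤ e k) →
      ∃ z' : UY, (∀ a ∈ A, |dist z' a - g a| ≤ e (k+1)) ∧ dist z' z ≤ e k + 2 * e (k+1) :=
    fun k z hz => UY_step A g hg0 hadm (e k) (e (k+1)) (hepos k) (hepos (k+1)) z hz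
  set seq : ∀ k : ℕ, {z : UY // ∀ a ∈ A, |dist z a - g a| ≤ e k} :=
    fun k => Nat.rec ⟨Classical.choose h0, Classical.choose_spec h0⟩
      (fun k ih => ⟨Classical.choose (hstep k ih.1 ih.2),
        (Classical.choose_spec (hstep k ih.1 ih.2)).1⟩) k with hseq
  have hd : ∀ k, dist (seq (k+1)).1 (seq k).1 ≤ e k + 2 * e (k+1) :=
    fun k => (Classical.choose_spec (hstep k (seq k).1 (seq k).2)).2
  have hcauchy : CauchySeq (fun k => (seq k).1) := by
    apply cauchySeq_of_le_geometric (1/2 : ℝ) 2 (by norm_num)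
    intro n
    rw [dist_comm]
    calc dist (seq (n+1)).1 (seq n).1 ≤ e n + 2 * e (n+1) := hd n
      _ = 2 * (1/2)^n := by rw [he]; ring
  obtain ⟨z, hz⟩ := cauchySeq_tendsto_of_complete hcauchy
  refine ⟨z, ?_⟩
  intro a ha
  have h1 : Filter.Tendsto (fun k => dist (seq k).1 a) Filter.atTop (nhds (dist z a)) :=
    (hz.dist (tendsto_const_nhds : Filter.Tendsto (fun _ : ℕ => a) Filter.atTop (nhds a)))
  have h2 : Filter.Tendsto (fun k => dist (seq k).1 a) Filter.atTop (nhds (g a)) := by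
    rw [tendsto_iff_dist_tendsto_zero]
    apply squeeze_zero (fun k => dist_nonneg) (g := fun k => e k)
    · intro k
      rw [Real.dist_eq]
      exact (seq k).2 a ha
    · rw [he]
      exact tendsto_pow_atTop_nhds_zero_of_lt_one (by norm_num) (by norm_num)
  exact tendsto_nhds_unique h1 h2
end UYprops
section BackForth
open UniformSpace
open scoped Classical

variable {X : Type*} [MetricSpace X] [Nonempty X] [CompleteSpace X]

/-- one step of the back-and-forth construction -/
noncomputable def pick2 (u : ℕ → UY) (v : ℕ → X) (n : ℕ) (f : ℕ → UY × X) : UY × X :=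
  if n % 2 = 0 then
    (u (n/2),
      if h : ∃ z : X, ∀ m, m < n → dist z (f m).2 = dist (u (n/2)) (f m).1 then h.choose
      else Classical.arbitrary X)
  else
    (if h : ∃ w : UY, ∀ m, m < n → dist w (f m).1 = dist (v (n/2)) (f m).2 then h.choose
      else Classical.arbitrary UY,
     v (n/2))

noncomputable def pf (u : ℕ → UY) (v : ℕ → X) : ℕ → ℕ → UY × X
  | 0 => fun _ => (Classical.arbitrary UY, Classical.arbitrary X)
  | n+1 => fun m => if m = n then pick2 u v n (pf u v n) else pf u v n m

noncomputable def bf (u : ℕ → UY) (v : ℕ → X) (n : ℕ) : UY × X := pf u v (n+1) n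

variable (u : ℕ → UY) (v : ℕ → X)

lemma pf_stable : ∀ {n n' m : ℕ}, m < n → n ≤ n' → pf u v n' m = pf u v n m := by
  intro n n' m h1 h2
  induction n' with
  | zero => omega
  | succ k ih =>
    rcases Nat.eq_or_lt_of_le h2 with h | h
    · rw [h]
    · have hk : n ≤ k := by omega
      show (if m = k then pick2 u v k (pf u v k) else pf u v k m) = pf u v n m
      rw [if_neg (by omega), ih hk]

lemma bf_eq (n : ℕ) : bf u v n = pick2 u v n (pf u v n) := by
  show (if n = n then _ else _) = _
  rw [if_pos rfl]

lemma pf_eq_bf {m n : ℕ} (h : m < n) : pf u v n m = bf u v m :=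
  pf_stable u v (Nat.lt_succ_self m) h

lemma bf_even (k : ℕ) : (bf u v (2*k)).1 = u k := by
  rw [bf_eq]
  unfold pick2
  rw [if_pos (by omega)]
  simp only
  congr 1
  omega

lemma bf_odd (k : ℕ) : (bf u v (2*k+1)).2 = v k := by
  rw [bf_eq]
  unfold pick2
  rw [if_neg (by omega)]
  show v ((2*k+1)/2) = v k
  congr 1
  omega

/-- the main invariant -/
def BFInv (n : ℕ) : Prop :=
  ∀ i, i < n → ∀ j, j < n → dist (bf u v i).1 (bf u v j).1 = dist (bf u v i).2 (bf u v j).2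

variable (hX : ExtProp X)

include hX in
lemma inv_step (n : ℕ) (h : BFInv u v n) : BFInv u v (n+1) := by
  classical
  -- key: the new pair preserves distances to all older pairs
  have key : ∀ m, m < n → dist (bf u v n).1 (bf u v m).1 = dist (bf u v n).2 (bf u v m).2 := by
    intro m hm
    rw [bf_eq]
    unfold pick2
    by_cases hpar : n % 2 = 0
    · rw [if_pos hpar]
      simp only
      set y := u (n/2) with hy
      have hex : ∃ z : X, ∀ m, m < n → dist z ((pf u v n) m).2 = dist y ((pf u v n) m).1 := by
        -- use extension property of X
        set A : Finset X := (Finset.range n).image (fun m => (bf u v m).2) with hA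
        set gfun : X → ℝ := fun xx =>
          if hw : ∃ m, m < n ∧ (bf u v m).2 = xx then dist y (bf u v hw.choose).1 else 0
          with hg
        have hgval : ∀ m, m < n → gfun ((bf u v m).2) = dist y (bf u v m).1 := by
          intro m hm'
          have hw : ∃ m', m' < n ∧ (bf u v m').2 = (bf u v m).2 := ⟨m, hm', rfl⟩
          rw [hg]
          simp only
          rw [dif_pos hw]
          -- well-definedness
          obtain ⟨hlt, heq⟩ := hw.choose_spec
          have h0 : dist (bf u v hw.choose).1 (bf u v m).1
              = dist (bf u v hw.choose).2 (bf u v m).2 := h _ hlt _ hm'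
          rw [heq, dist_self] at h0
          have : (bf u v hw.choose).1 = (bf u v m).1 := by
            have := dist_eq_zero.1 h0
            exact this
          rw [this]
        have hg0' : ∀ a ∈ A, 0 ≤ gfun a := by
          intro a ha
          rw [hA] at ha
          obtain ⟨m', hm', rfl⟩ := Finset.mem_image.1 ha
          rw [hgval m' (Finset.mem_range.1 hm')]
          exact dist_nonneg
        have hadm' : ∀ a ∈ A, ∀ b ∈ A, |gfun a - gfun b| ≤ dist a b ∧ dist a b ≤ gfun a + gfun b := by
          intro a ha b hb
          rw [hA] at ha hb
          obtain ⟨i, hi, rfl⟩ := Finset.mem_image.1 ha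
          obtain ⟨j, hj, rfl⟩ := Finset.mem_image.1 hb
          rw [Finset.mem_range] at hi hj
          rw [hgval i hi, hgval j hj, ← h _ hi _ hj]
          constructor
          · have h1 := abs_dist_sub_le (bf u v i).1 (bf u v j).1 y
            rw [dist_comm (bf u v i).1 y, dist_comm (bf u v j).1 y] at h1
            exact h1
          · have h1 := dist_triangle (bf u v i).1 y (bf u v j).1
            rw [dist_comm (bf u v i).1 y] at h1
            exact h1
        obtain ⟨z, hz⟩ := hX A gfun hg0' hadm'
        refine ⟨z, ?_⟩
        intro m hm'
        rw [pf_eq_bf u v hm']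
        have hmem : (bf u v m).2 ∈ A := by
          rw [hA]
          exact Finset.mem_image_of_mem _ (Finset.mem_range.2 hm')
        rw [hz _ hmem, hgval m hm']
      rw [dif_pos hex]
      have := hex.choose_spec m hm
      rw [pf_eq_bf u v hm] at this
      rw [this]
    · rw [if_neg hpar]
      simp only
      set x := v (n/2) with hx
      have hex : ∃ w : UY, ∀ m, m < n → dist w ((pf u v n) m).1 = dist x ((pf u v n) m).2 := by
        set A : Finset UY := (Finset.range n).image (fun m => (bf u v m).1) with hA
        set gfun : UY → ℝ := fun yy =>
          if hw : ∃ m, m < n ∧ (bf u v m).1 = yy then dist x (bf u v hw.choose).2 else 0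
          with hg
        have hgval : ∀ m, m < n → gfun ((bf u v m).1) = dist x (bf u v m).2 := by
          intro m hm'
          have hw : ∃ m', m' < n ∧ (bf u v m').1 = (bf u v m).1 := ⟨m, hm', rfl⟩
          rw [hg]
          simp only
          rw [dif_pos hw]
          obtain ⟨hlt, heq⟩ := hw.choose_spec
          have h0 : dist (bf u v hw.choose).1 (bf u v m).1
              = dist (bf u v hw.choose).2 (bf u v m).2 := h _ hlt _ hm'
          rw [heq, dist_self] at h0
          have : (bf u v hw.choose).2 = (bf u v m).2 := dist_eq_zero.1 h0.symm
          rw [this]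
        have hg0' : ∀ a ∈ A, 0 ≤ gfun a := by
          intro a ha
          rw [hA] at ha
          obtain ⟨m', hm', rfl⟩ := Finset.mem_image.1 ha
          rw [hgval m' (Finset.mem_range.1 hm')]
          exact dist_nonneg
        have hadm' : ∀ a ∈ A, ∀ b ∈ A, |gfun a - gfun b| ≤ dist a b ∧ dist a b ≤ gfun a + gfun b := by
          intro a ha b hb
          rw [hA] at ha hb
          obtain ⟨i, hi, rfl⟩ := Finset.mem_image.1 ha
          obtain ⟨j, hj, rfl⟩ := Finset.mem_image.1 hb
          rw [Finset.mem_range] at hi hj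
          rw [hgval i hi, hgval j hj, h _ hi _ hj]
          constructor
          · have h1 := abs_dist_sub_le (bf u v i).2 (bf u v j).2 x
            rw [dist_comm (bf u v i).2 x, dist_comm (bf u v j).2 x] at h1
            exact h1
          · have h1 := dist_triangle (bf u v i).2 x (bf u v j).2
            rw [dist_comm (bf u v i).2 x] at h1
            exact h1
        obtain ⟨w, hw⟩ := UY_ext A gfun hg0' hadm'
        refine ⟨w, ?_⟩
        intro m hm'
        rw [pf_eq_bf u v hm']
        have hmem : (bf u v m).1 ∈ A := by
          rw [hA]
          exact Finset.mem_image_of_mem _ (Finset.mem_range.2 hm')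
        rw [hw _ hmem, hgval m hm']
      rw [dif_pos hex]
      have := hex.choose_spec m hm
      rw [pf_eq_bf u v hm] at this
      rw [this]
  intro i hi j hj
  rcases Nat.lt_succ_iff_lt_or_eq.1 hi with hi' | rfl
  · rcases Nat.lt_succ_iff_lt_or_eq.1 hj with hj' | rfl
    · exact h i hi' j hj'
    · rw [dist_comm (bf u v i).1 (bf u v j).1, dist_comm (bf u v i).2 (bf u v j).2]
      exact key i hi'
  · rcases Nat.lt_succ_iff_lt_or_eq.1 hj with hj' | rfl
    · exact key j hj'
    · rw [dist_self, dist_self]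

include hX in
lemma inv_all (i j : ℕ) :
    dist (bf u v i).1 (bf u v j).1 = dist (bf u v i).2 (bf u v j).2 := by
  have : ∀ n, BFInv u v n := by
    intro n
    induction n with
    | zero => intro i hi; omega
    | succ n ih => exact inv_step u v hX n ih
  exact this (max i j + 1) i (by omega) j (by omega)

end BackForth
section Glue

lemma extend_exists {α β : Type*} [MetricSpace α] [MetricSpace β] [CompleteSpace β]
    (p : ℕ → α) (q : ℕ → β)
    (hpq : ∀ i j, dist (p i) (p j) = dist (q i) (q j))
    (hp : ∀ (a : α) (ε : ℝ), 0 < ε → ∃ j, dist a (p j) < ε) :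
    ∀ a : α, ∃ b : β, ∀ j, dist b (q j) = dist a (p j) := by
  intro a
  have hpk : ∀ k : ℕ, ∃ j, dist a (p j) < (1/2)^k :=
    fun k => hp a ((1/2)^k) (by positivity)
  set s : ℕ → ℕ := fun k => (hpk k).choose with hs
  have hsd : ∀ k, dist a (p (s k)) < (1/2)^k := fun k => (hpk k).choose_spec
  have hcau : CauchySeq (fun k => q (s k)) := by
    apply cauchySeq_of_le_geometric (1/2 : ℝ) 2 (by norm_num)
    intro k
    have h1 := hsd k
    have h2 := hsd (k+1)
    have h3 := dist_triangle (p (s k)) a (p (s (k+1)))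
    rw [dist_comm (p (s k)) a] at h3
    have : (1/2:ℝ)^(k+1) ≤ (1/2)^k := by
      apply pow_le_pow_of_le_one (by norm_num) (by norm_num)
      omega
    calc dist (q (s k)) (q (s (k+1))) = dist (p (s k)) (p (s (k+1))) := (hpq _ _).symm
      _ ≤ dist a (p (s k)) + dist a (p (s (k+1))) := by rw [dist_comm a (p (s k))] at h3 ⊢; linarith
      _ ≤ 2 * (1/2)^k := by linarith
  obtain ⟨b, hb⟩ := cauchySeq_tendsto_of_complete hcau
  refine ⟨b, ?_⟩
  intro j
  have h1 : Filter.Tendsto (fun k => dist (q (s k)) (q j)) Filter.atTop (nhds (dist b (q j))) :=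
    hb.dist tendsto_const_nhds
  have h2 : Filter.Tendsto (fun k => dist (q (s k)) (q j)) Filter.atTop (nhds (dist a (p j))) := by
    rw [tendsto_iff_dist_tendsto_zero]
    apply squeeze_zero (fun k => dist_nonneg) (g := fun k => (1/2)^k)
    · intro k
      rw [Real.dist_eq, ← hpq]
      have h3 := abs_dist_sub_le (p (s k)) a (p j)
      have h4 := hsd k
      rw [dist_comm (p (s k)) a] at h3
      linarith [abs_le.1 h3]
    · exact tendsto_pow_atTop_nhds_zero_of_lt_one (by norm_num) (by norm_num)
  exact (tendsto_nhds_unique h1 h2) ▸ rfl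

lemma isometryEquiv_of_pair {α β : Type*} [MetricSpace α] [MetricSpace β]
    [CompleteSpace α] [CompleteSpace β]
    (p : ℕ → α) (q : ℕ → β)
    (hpq : ∀ i j, dist (p i) (p j) = dist (q i) (q j))
    (hp : ∀ (a : α) (ε : ℝ), 0 < ε → ∃ j, dist a (p j) < ε)
    (hq : ∀ (b : β) (ε : ℝ), 0 < ε → ∃ j, dist b (q j) < ε) :
    Nonempty (α ≃ᵢ β) := by
  classical
  have hkeyF := extend_exists p q hpq hp
  have hkeyG := extend_exists q p (fun i j => (hpq i j).symm) hq
  set F : α → β := fun a => (hkeyF a).choose with hF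
  set G : β → α := fun b => (hkeyG b).choose with hG
  have hFs : ∀ (a : α) (j : ℕ), dist (F a) (q j) = dist a (p j) :=
    fun a => (hkeyF a).choose_spec
  have hGs : ∀ (b : β) (j : ℕ), dist (G b) (p j) = dist b (q j) :=
    fun b => (hkeyG b).choose_spec
  have hGF : ∀ a, G (F a) = a := by
    intro a
    have : ∀ ε : ℝ, 0 < ε → dist (G (F a)) a ≤ 0 + ε := by
      intro ε hε
      obtain ⟨j, hj⟩ := hp a (ε/2) (by linarith)
      have h1 : dist (G (F a)) a ≤ dist (G (F a)) (p j) + dist (p j) a := dist_triangle _ _ _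
      rw [hGs (F a) j, hFs a j] at h1
      rw [dist_comm (p j) a] at h1
      linarith
    have h2 := le_of_forall_pos_le_add this
    exact dist_eq_zero.1 (le_antisymm h2 dist_nonneg)
  have hFG : ∀ b, F (G b) = b := by
    intro b
    have : ∀ ε : ℝ, 0 < ε → dist (F (G b)) b ≤ 0 + ε := by
      intro ε hε
      obtain ⟨j, hj⟩ := hq b (ε/2) (by linarith)
      have h1 : dist (F (G b)) b ≤ dist (F (G b)) (q j) + dist (q j) b := dist_triangle _ _ _
      rw [hFs (G b) j, hGs b j] at h1
      rw [dist_comm (q j) b] at h1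
      linarith
    have h2 := le_of_forall_pos_le_add this
    exact dist_eq_zero.1 (le_antisymm h2 dist_nonneg)
  have hiso : ∀ a a' : α, dist (F a) (F a') = dist a a' := by
    intro a a'
    apply le_antisymm
    · apply le_of_forall_pos_le_add
      intro ε hε
      obtain ⟨j, hj⟩ := hp a (ε/4) (by linarith)
      obtain ⟨k, hk⟩ := hp a' (ε/4) (by linarith)
      have t1 : dist (F a) (F a') ≤ dist (F a) (q j) + dist (q j) (q k) + dist (q k) (F a') :=
        dist_triangle4 _ _ _ _
      rw [hFs a j, ← hpq j k, dist_comm (q k) (F a'), hFs a' k] at t1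
      have t2 : dist (p j) (p k) ≤ dist (p j) a + dist a a' + dist a' (p k) :=
        dist_triangle4 _ _ _ _
      rw [dist_comm (p j) a, dist_comm a' (p k)] at t2
      linarith [dist_comm a' (p k), dist_comm (p k) a']
    · apply le_of_forall_pos_le_add
      intro ε hε
      obtain ⟨j, hj⟩ := hp a (ε/4) (by linarith)
      obtain ⟨k, hk⟩ := hp a' (ε/4) (by linarith)
      have t1 : dist a a' ≤ dist a (p j) + dist (p j) (p k) + dist (p k) a' :=
        dist_triangle4 _ _ _ _
      have t2 : dist (q j) (q k) ≤ dist (q j) (F a) + dist (F a) (F a') + dist (F a') (q k) :=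
        dist_triangle4 _ _ _ _
      rw [dist_comm (q j) (F a), hFs a j, hFs a' k] at t2
      rw [hpq j k] at t1
      linarith [dist_comm (p k) a']
  exact ⟨⟨⟨F, G, hGF, hFG⟩, Isometry.of_dist_eq hiso⟩⟩

end Glue
section Final
open UniformSpace

lemma exists_iso (X : Type*) [MetricSpace X] [Nonempty X] [CompleteSpace X]
    [TopologicalSpace.SeparableSpace X] (hX : ExtProp X) : Nonempty (UY ≃ᵢ X) := by
  classical
  obtain ⟨sv, hsv⟩ := TopologicalSpace.exists_dense_seq X
  obtain ⟨su, hsu⟩ := exists_surjective_nat Zw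
  set u : ℕ → UY := fun n => ((su n : Zw) : UY) with hu'
  have hu : DenseRange u := by
    have hr : Set.range u = Set.range ((↑) : Zw → UY) := by
      rw [hu']
      ext b
      constructor
      · rintro ⟨n, rfl⟩; exact ⟨su n, rfl⟩
      · rintro ⟨x, rfl⟩
        obtain ⟨n, rfl⟩ := hsu x
        exact ⟨n, rfl⟩
    rw [DenseRange, hr]
    exact Completion.denseRange_coe
  have hp : ∀ (a : UY) (ε : ℝ), 0 < ε → ∃ j, dist a ((bf u sv j).1) < ε := by
    intro a ε hε
    obtain ⟨k, hk⟩ := hu.exists_dist_lt a hε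
    exact ⟨2*k, by rw [bf_even]; exact hk⟩
  have hq : ∀ (b : X) (ε : ℝ), 0 < ε → ∃ j, dist b ((bf u sv j).2) < ε := by
    intro b ε hε
    obtain ⟨k, hk⟩ := hsv.exists_dist_lt b hε
    exact ⟨2*k+1, by rw [bf_odd]; exact hk⟩
  exact isometryEquiv_of_pair (fun n => (bf u sv n).1) (fun n => (bf u sv n).2)
    (fun i j => inv_all u sv hX i j) hp hq

noncomputable def transY (y : UY) : UY ≃ᵢ UY :=
  ⟨Equiv.addRight y, Isometry.of_dist_eq fun p q => UY.dist_add_right p q y⟩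

theorem stmt_4' (X : Type*) [MetricSpace X] (hX : IsUrysohn X) :
    ∃ G : Subgroup (X ≃ᵢ X),
      (∀ a ∈ G, ∀ b ∈ G, a * b = b * a) ∧
      (∀ x y : X, ∃ g ∈ G, g x = y) ∧
      (∃ g ∈ G, ¬ IsOfFinOrder g) := by
  classical
  obtain ⟨hXne, hXcomp, hXsep, hXext⟩ := hX
  haveI := hXne
  haveI := hXcomp
  haveI := hXsep
  obtain ⟨Φ⟩ := exists_iso X hXext
  set T : UY → (X ≃ᵢ X) := fun y => (Φ.symm.trans (transY y)).trans Φ with hT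
  have hTapp : ∀ (y : UY) (x : X), T y x = Φ (Φ.symm x + y) := fun y x => rfl
  have hmul : ∀ y z : UY, T y * T z = T (z + y) := by
    intro y z
    apply IsometryEquiv.ext
    intro x
    show (T y) ((T z) x) = T (z + y) x
    rw [hTapp, hTapp, hTapp, Φ.symm_apply_apply, add_assoc]
  have hone : T 0 = 1 := by
    apply IsometryEquiv.ext
    intro x
    show T 0 x = x
    rw [hTapp, add_zero, Φ.apply_symm_apply]
  set Gsub : Subgroup (X ≃ᵢ X) :=
    { carrier := Set.range T
      one_mem' := ⟨0, hone⟩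
      mul_mem' := by
        rintro a b ⟨y, rfl⟩ ⟨z, rfl⟩
        exact ⟨z + y, (hmul y z).symm⟩
      inv_mem' := by
        rintro a ⟨y, rfl⟩
        refine ⟨-y, ?_⟩
        apply eq_inv_of_mul_eq_one_left
        rw [hmul, add_neg_cancel, hone] } with hGsub
  have hmem : ∀ e : X ≃ᵢ X, e ∈ Gsub ↔ ∃ y, T y = e := fun e => Iff.rfl
  refine ⟨Gsub, ?_, ?_, ?_⟩
  · rintro a ⟨y, rfl⟩ b ⟨z, rfl⟩
    rw [hmul, hmul, add_comm]
  · intro x x'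
    refine ⟨T (Φ.symm x' - Φ.symm x), ⟨_, rfl⟩, ?_⟩
    rw [hTapp, add_sub_cancel, Φ.apply_symm_apply]
  · set γ₀ : Zw := Finsupp.single 0 (1:ℤ) with hγ₀
    set y₀ : UY := ((γ₀ : Zw) : UY) with hy₀
    have hcoe : ∀ (m : ℕ) (x : Zw), ((m • x : Zw) : UY) = m • ((x : Zw) : UY) := by
      intro m x
      induction m with
      | zero =>
        rw [zero_smul, zero_smul]
        exact Completion.coe_zero
      | succ k ih =>
        rw [succ_nsmul, succ_nsmul, Completion.coe_add, ih]
    refine ⟨T y₀, ⟨y₀, rfl⟩, ?_⟩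
    intro hfin
    obtain ⟨n, hn, hgn⟩ := isOfFinOrder_iff_pow_eq_one.1 hfin
    have hpow : ∀ m : ℕ, (T y₀) ^ m = T (m • y₀) := by
      intro m
      induction m with
      | zero => rw [pow_zero, zero_smul, hone]
      | succ m ih =>
        rw [pow_succ, ih, hmul, succ_nsmul, add_comm]
    rw [hpow n] at hgn
    -- evaluate at Φ 0
    have h1 : T (n • y₀) (Φ 0) = Φ (n • y₀) := by
      rw [hTapp, Φ.symm_apply_apply, zero_add]
    have h2 : T (n • y₀) (Φ 0) = Φ 0 := by rw [hgn]; rfl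
    have h3 : (n • y₀ : UY) = 0 := by
      have := h1.symm.trans h2
      exact Φ.injective this
    -- transfer to Zw
    have h4 : ((n • γ₀ : Zw) : UY) = ((0 : Zw) : UY) := by
      rw [hcoe n γ₀, ← hy₀, h3, Completion.coe_zero]
    have h5 : (n • γ₀ : Zw) = 0 := by
      by_contra hne'
      have hd : dist ((n • γ₀ : Zw) : UY) ((0 : Zw) : UY) = dist (n • γ₀ : Zw) (0 : Zw) :=
        UY.dist_coe _ _
      rw [h4, dist_self] at hd
      have : dist (n • γ₀ : Zw) (0 : Zw) = nuG (n • γ₀ - 0) := rfl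
      rw [sub_zero] at this
      have hpos := nuG_pos hne'
      rw [this] at hd
      linarith
    have h6 : (n • γ₀ : Zw) 0 = (n : ℤ) := by
      rw [hγ₀, Finsupp.smul_apply, Finsupp.single_eq_same]
      simp
    rw [h5] at h6
    simp only [Finsupp.coe_zero, Pi.zero_apply] at h6
    omega

end Final

theorem stmt_4 (X : Type*) [MetricSpace X] (hX : IsUrysohn X) :
    ∃ G : Subgroup (X ≃ᵢ X),
      (∀ a ∈ G, ∀ b ∈ G, a * b = b * a) ∧
      (∀ x y : X, ∃ g ∈ G, g x = y) ∧
      (∃ g ∈ G, ¬ IsOfFinOrder g) := by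
  exact stmt_4' X hX
end Space
end

section
/- Let X be a rational Urysohn space. Then there exists an isometric bijection g : X → X such that the cyclic group generated by g acts transitively on X, i.e. for all x, y ∈ X there exists n ∈ ℤ with gⁿ(x) = y. -/
def IsRationalUrysohn (X : Type*) [MetricSpace X] : Prop :=
  Nonempty X ∧ Countable X ∧
    (∀ x y : X, ∃ q : ℚ, dist x y = (q : ℝ)) ∧
    (∀ (A : Finset X) (g : X → ℚ),
      (∀ a ∈ A, 0 ≤ g a) →
      (∀ a ∈ A, ∀ b ∈ A,
        |(g a : ℝ) - (g b : ℝ)| ≤ dist a b ∧ dist a b ≤ (g a : ℝ) + (g b : ℝ)) →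
      ∃ z : X, ∀ a ∈ A, dist z a = (g a : ℝ))

namespace StmtFive

structure Hyp (W : ℕ) (δ g : ℕ → ℚ) : Prop where
  hW : 1 ≤ W
  hδ0 : δ 0 = 0
  hδpos : ∀ k, 1 ≤ k → k ≤ W → 0 < δ k
  htri : ∀ a b, a + b ≤ W → δ (a+b) ≤ δ a + δ b
  hrev : ∀ a b, a + b ≤ W → δ a ≤ δ (a+b) + δ b
  hgpos : ∀ t, t ≤ W → 0 < g t
  hadm1 : ∀ a b, a ≤ b → b ≤ W → g b ≤ g a + δ (b - a)
  hadm2 : ∀ a b, a ≤ b → b ≤ W → g a ≤ g b + δ (b - a)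
  hadm3 : ∀ a b, a ≤ b → b ≤ W → δ (b - a) ≤ g a + g b

variable {W : ℕ} {δ g : ℕ → ℚ}

section Defs

variable (W δ g)

def vals : Finset ℚ := ((Finset.range (W+1)).image δ) ∪ ((Finset.range (W+1)).image g)

def D : ℕ := ∏ q ∈ vals W δ g, q.den

noncomputable def P : ℚ := (vals W δ g).max' ⟨δ 0, by
  simp only [vals, Finset.mem_union, Finset.mem_image]
  exact Or.inl ⟨0, by simp⟩⟩

noncomputable def NB : ℕ := (⌈P W δ g⌉₊ + 1) * D W δ g

noncomputable def M : ℕ := W * (NB W δ g + 2)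

end Defs

lemma vals_nonempty : (vals W δ g).Nonempty := by
  refine ⟨δ 0, ?_⟩
  simp only [vals, Finset.mem_union, Finset.mem_image]
  exact Or.inl ⟨0, by simp⟩

lemma delta_mem_vals {k : ℕ} (hk : k ≤ W) : δ k ∈ vals W δ g := by
  simp only [vals, Finset.mem_union, Finset.mem_image]
  exact Or.inl ⟨k, by simp [Nat.lt_succ_iff, hk]⟩

lemma g_mem_vals {t : ℕ} (ht : t ≤ W) : g t ∈ vals W δ g := by
  simp only [vals, Finset.mem_union, Finset.mem_image]
  exact Or.inr ⟨t, by simp [Nat.lt_succ_iff, ht]⟩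

lemma le_P {q : ℚ} (hq : q ∈ vals W δ g) : q ≤ P W δ g := Finset.le_max' _ _ hq

lemma D_pos : 0 < D W δ g := Finset.prod_pos (fun q _ => q.pos)

lemma den_dvd_D {q : ℚ} (hq : q ∈ vals W δ g) : q.den ∣ D W δ g :=
  Finset.dvd_prod_of_mem _ hq

lemma exists_nat_mul_D {q : ℚ} (hq : q ∈ vals W δ g) (h0 : 0 ≤ q) :
    ∃ n : ℕ, (n : ℚ) = q * D W δ g := by
  obtain ⟨c, hc⟩ := den_dvd_D (δ := δ) (g := g) hq
  refine ⟨(q.num).toNat * c, ?_⟩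
  have hnum : (0:ℤ) ≤ q.num := Rat.num_nonneg.mpr h0
  have h1 : q * (q.den:ℚ) = (q.num:ℚ) := by exact_mod_cast Rat.mul_den_eq_num q
  push_cast [Int.toNat_of_nonneg hnum, hc]
  rw [← mul_assoc, h1]
  norm_cast
  push_cast
  rw [Int.toNat_of_nonneg hnum]


section Defs2
variable (W δ g)

noncomputable def w : ℤ → ℚ := fun s => if s.natAbs ≤ W then δ s.natAbs else g (M W δ g - s.natAbs)

def Ok (s : ℤ) : Prop := (1 ≤ s.natAbs ∧ s.natAbs ≤ W) ∨ (M W δ g - W ≤ s.natAbs ∧ s.natAbs ≤ M W δ g)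

noncomputable def nw : ℤ → ℕ := fun s => ((w W δ g s) * D W δ g).num.toNat

def IsPath (p : Multiset ℤ) (m : ℤ) : Prop := (∀ s ∈ p, Ok W δ g s) ∧ p.sum = m

noncomputable def cost (p : Multiset ℤ) : ℚ := (p.map (w W δ g)).sum

noncomputable def costN (p : Multiset ℤ) : ℕ := (p.map (nw W δ g)).sum

def CS (m : ℤ) : Set ℕ := {n | ∃ p, IsPath W δ g p m ∧ costN W δ g p = n}

noncomputable def dd (m : ℤ) : ℚ := ((sInf (CS W δ g m) : ℕ) : ℚ) / D W δ g

end Defs2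

lemma NB_pos : 1 ≤ NB W δ g := Nat.one_le_iff_ne_zero.mpr (by
  have := D_pos (W := W) (δ := δ) (g := g)
  simp [NB]; omega)

lemma M_big (h : Hyp W δ g) : 2 * W < M W δ g := by
  have h1 := NB_pos (W := W) (δ := δ) (g := g)
  have h2 := h.hW
  calc 2 * W < W * (1 + 2) := by omega
  _ ≤ W * (NB W δ g + 2) := by
        exact Nat.mul_le_mul_left _ (by omega)

lemma M_eq : M W δ g = W * NB W δ g + 2 * W := by simp [M]; ring

lemma w_mem_vals (h : Hyp W δ g) {s : ℤ} (hs : Ok W δ g s) : w W δ g s ∈ vals W δ g := by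
  have hM := M_big h
  rcases hs with ⟨h1, h2⟩ | ⟨h1, h2⟩
  · simp only [w, if_pos h2]; exact delta_mem_vals h2
  · have : ¬ (s.natAbs ≤ W) := by omega
    simp only [w, if_neg this]
    exact g_mem_vals (by omega)

lemma w_pos (h : Hyp W δ g) {s : ℤ} (hs : Ok W δ g s) : 0 < w W δ g s := by
  have hM := M_big h
  rcases hs with ⟨h1, h2⟩ | ⟨h1, h2⟩
  · simp only [w, if_pos h2]; exact h.hδpos _ h1 h2
  · have : ¬ (s.natAbs ≤ W) := by omega
    simp only [w, if_neg this]
    exact h.hgpos _ (by omega)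

lemma w_le_P (h : Hyp W δ g) {s : ℤ} (hs : Ok W δ g s) : w W δ g s ≤ P W δ g :=
  le_P (w_mem_vals h hs)

lemma w_neg (s : ℤ) : w W δ g (-s) = w W δ g s := by simp [w]

lemma Ok_neg {s : ℤ} (hs : Ok W δ g s) : Ok W δ g (-s) := by
  simpa [Ok] using hs

lemma nw_cast (h : Hyp W δ g) {s : ℤ} (hs : Ok W δ g s) :
    (nw W δ g s : ℚ) = w W δ g s * D W δ g := by
  obtain ⟨n, hn⟩ := exists_nat_mul_D (w_mem_vals h hs) (le_of_lt (w_pos h hs))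
  have : ((w W δ g s * D W δ g)).num = n := by rw [← hn]; simp
  simp [nw, this, hn]

lemma nw_pos (h : Hyp W δ g) {s : ℤ} (hs : Ok W δ g s) : 1 ≤ nw W δ g s := by
  by_contra hc
  have h0 : nw W δ g s = 0 := by omega
  have hcast := nw_cast h hs
  rw [h0] at hcast
  norm_num at hcast
  have hDq : (0:ℚ) < (D W δ g : ℚ) := by
    exact_mod_cast D_pos (W := W) (δ := δ) (g := g)
  have hw := w_pos h hs
  rcases hcast with h' | h'
  · linarith
  · have := D_pos (W := W) (δ := δ) (g := g); omega

lemma cost_nonneg (h : Hyp W δ g) {p : Multiset ℤ} (hp : ∀ s ∈ p, Ok W δ g s) :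
    0 ≤ cost W δ g p := by
  apply Multiset.sum_nonneg
  intro x hx
  obtain ⟨s, hs, rfl⟩ := Multiset.mem_map.mp hx
  exact le_of_lt (w_pos h (hp s hs))

lemma costN_cast (h : Hyp W δ g) {p : Multiset ℤ} (hp : ∀ s ∈ p, Ok W δ g s) :
    (costN W δ g p : ℚ) = cost W δ g p * D W δ g := by
  induction p using Multiset.induction with
  | empty => simp [costN, cost]
  | cons a t ih =>
    have ha : Ok W δ g a := hp a (Multiset.mem_cons_self a t)
    have ht : ∀ s ∈ t, Ok W δ g s := fun s hs => hp s (Multiset.mem_cons_of_mem hs)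
    simp only [costN, cost, Multiset.map_cons, Multiset.sum_cons, Nat.cast_add] at *
    rw [ih ht, nw_cast h ha]
    ring

lemma card_le_costN (h : Hyp W δ g) {p : Multiset ℤ} (hp : ∀ s ∈ p, Ok W δ g s) :
    Multiset.card p ≤ costN W δ g p := by
  have : Multiset.card p • 1 ≤ (p.map (nw W δ g)).sum := by
    apply le_trans _ (Multiset.card_nsmul_le_sum (fun x hx => by
      obtain ⟨s, hs, rfl⟩ := Multiset.mem_map.mp hx
      exact nw_pos h (hp s hs)))
    simp
  simpa [costN] using this

lemma P_lt_cost_of_card (h : Hyp W δ g) {p : Multiset ℤ} (hp : ∀ s ∈ p, Ok W δ g s)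
    (hc : NB W δ g ≤ Multiset.card p) : P W δ g < cost W δ g p := by
  have hD := D_pos (W := W) (δ := δ) (g := g)
  have hDq : (0:ℚ) < (D W δ g : ℚ) := by exact_mod_cast hD
  have h1 : (NB W δ g : ℚ) ≤ (costN W δ g p : ℚ) := by
    exact_mod_cast le_trans hc (card_le_costN h hp)
  rw [costN_cast h hp] at h1
  have h2 : (NB W δ g : ℚ) = ((⌈P W δ g⌉₊ : ℚ) + 1) * D W δ g := by
    simp only [NB]; push_cast; ring
  rw [h2] at h1
  have h3 : P W δ g < (⌈P W δ g⌉₊ : ℚ) + 1 :=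
    lt_of_le_of_lt (Nat.le_ceil _) (by exact_mod_cast Nat.lt_succ_self _)
  have h4 : ((⌈P W δ g⌉₊ : ℚ) + 1) ≤ cost W δ g p := by
    have := le_of_mul_le_mul_right h1 hDq
    linarith
  linarith

lemma CS_nonempty (h : Hyp W δ g) (m : ℤ) : (CS W δ g m).Nonempty := by
  refine ⟨_, Multiset.replicate m.natAbs (if 0 ≤ m then (1:ℤ) else -1), ⟨?_, ?_⟩, rfl⟩
  · intro s hs
    rw [Multiset.eq_of_mem_replicate hs]
    left
    constructor <;> split <;> simp [h.hW]
  · rw [Multiset.sum_replicate]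
    rcases le_or_gt 0 m with hm | hm
    · rw [if_pos hm]
      simp only [nsmul_eq_mul, mul_one]
      omega
    · rw [if_neg (not_le.mpr hm)]
      simp only [nsmul_eq_mul, mul_neg_one]
      omega

lemma dd_exists (h : Hyp W δ g) (m : ℤ) :
    ∃ p, IsPath W δ g p m ∧ cost W δ g p = dd W δ g m := by
  obtain ⟨p, hp, hpc⟩ := Nat.sInf_mem (CS_nonempty h m)
  refine ⟨p, hp, ?_⟩
  have hD : (0:ℚ) < (D W δ g : ℚ) := by exact_mod_cast D_pos (W := W) (δ := δ) (g := g)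
  have := costN_cast h hp.1
  rw [hpc] at this
  rw [dd, this]
  field_simp

lemma dd_le (h : Hyp W δ g) {p : Multiset ℤ} {m : ℤ} (hp : IsPath W δ g p m) :
    dd W δ g m ≤ cost W δ g p := by
  have hD : (0:ℚ) < (D W δ g : ℚ) := by exact_mod_cast D_pos (W := W) (δ := δ) (g := g)
  have h1 : sInf (CS W δ g m) ≤ costN W δ g p := Nat.sInf_le ⟨p, hp, rfl⟩
  have h2 : ((sInf (CS W δ g m) : ℕ) : ℚ) ≤ (costN W δ g p : ℚ) := by exact_mod_cast h1
  rw [costN_cast h hp.1] at h2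
  rw [dd, div_le_iff₀ hD]
  linarith

lemma dd_nonneg (h : Hyp W δ g) (m : ℤ) : 0 ≤ dd W δ g m := by
  obtain ⟨p, hp, hc⟩ := dd_exists h m
  rw [← hc]; exact cost_nonneg h hp.1

lemma dd_zero (h : Hyp W δ g) : dd W δ g 0 = 0 := by
  have h1 : dd W δ g 0 ≤ cost W δ g 0 := dd_le h ⟨by simp, by simp⟩
  have h2 := dd_nonneg h 0
  simp [cost] at h1
  linarith

lemma dd_add (h : Hyp W δ g) (a b : ℤ) : dd W δ g (a + b) ≤ dd W δ g a + dd W δ g b := by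
  obtain ⟨p, hp, hpc⟩ := dd_exists h a
  obtain ⟨q, hq, hqc⟩ := dd_exists h b
  have : IsPath W δ g (p + q) (a + b) := by
    refine ⟨fun s hs => ?_, by simp [hp.2, hq.2]⟩
    rcases Multiset.mem_add.mp hs with h' | h'
    exacts [hp.1 s h', hq.1 s h']
  calc dd W δ g (a + b) ≤ cost W δ g (p + q) := dd_le h this
  _ = cost W δ g p + cost W δ g q := by simp [cost]
  _ = dd W δ g a + dd W δ g b := by rw [hpc, hqc]

lemma IsPath_neg {p : Multiset ℤ} {m : ℤ} (hp : IsPath W δ g p m) :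
    IsPath W δ g (p.map Neg.neg) (-m) := by
  refine ⟨fun s hs => ?_, ?_⟩
  · obtain ⟨t, ht, rfl⟩ := Multiset.mem_map.mp hs
    exact Ok_neg (hp.1 t ht)
  · rw [← hp.2]
    simpa using (Multiset.sum_map_neg' p)

lemma cost_map_neg (p : Multiset ℤ) : cost W δ g (p.map Neg.neg) = cost W δ g p := by
  simp only [cost, Multiset.map_map]
  congr 1
  apply Multiset.map_congr rfl
  intro x _
  exact w_neg x

lemma dd_neg (h : Hyp W δ g) (m : ℤ) : dd W δ g (-m) = dd W δ g m := by
  have key : ∀ m', dd W δ g (-m') ≤ dd W δ g m' := by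
    intro m'
    obtain ⟨p, hp, hpc⟩ := dd_exists h m'
    calc dd W δ g (-m') ≤ cost W δ g (p.map Neg.neg) := dd_le h (IsPath_neg hp)
    _ = dd W δ g m' := by rw [cost_map_neg, hpc]
  have h1 := key m
  have h2 := key (-m)
  rw [neg_neg] at h2
  linarith

lemma dd_rev (h : Hyp W δ g) (a b : ℤ) : dd W δ g a ≤ dd W δ g (a + b) + dd W δ g b := by
  have h1 := dd_add h (a + b) (-b)
  simp only [add_neg_cancel_right] at h1
  rw [dd_neg h b] at h1
  exact h1


lemma cost_cons (a : ℤ) (q : Multiset ℤ) :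
    cost W δ g (a ::ₘ q) = w W δ g a + cost W δ g q := by
  simp [cost]

lemma small_pair (h : Hyp W δ g) {u v : ℤ} (hu : u.natAbs ≤ W) (hv : v.natAbs ≤ W)
    (huv : (u + v).natAbs ≤ W) :
    u + v = 0 ∨ (Ok W δ g (u + v) ∧ w W δ g (u + v) ≤ w W δ g u + w W δ g v) := by
  by_cases h0 : u + v = 0
  · left; exact h0
  right
  have h1 : 1 ≤ (u + v).natAbs := by omega
  refine ⟨Or.inl ⟨h1, huv⟩, ?_⟩
  simp only [w, if_pos hu, if_pos hv, if_pos huv]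
  have hcases : (u+v).natAbs = u.natAbs + v.natAbs ∨ u.natAbs = (u+v).natAbs + v.natAbs
      ∨ v.natAbs = (u+v).natAbs + u.natAbs := by omega
  rcases hcases with hc | hc | hc
  · rw [hc]; exact h.htri _ _ (hc ▸ huv)
  · calc δ (u+v).natAbs ≤ δ ((u+v).natAbs + v.natAbs) + δ v.natAbs :=
          h.hrev _ _ (by omega)
    _ = δ u.natAbs + δ v.natAbs := by rw [← hc]
  · calc δ (u+v).natAbs ≤ δ ((u+v).natAbs + u.natAbs) + δ u.natAbs :=
          h.hrev _ _ (by omega)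
    _ = δ v.natAbs + δ u.natAbs := by rw [← hc]
    _ = δ u.natAbs + δ v.natAbs := by ring

lemma big_pair (h : Hyp W δ g) {u v : ℤ} (hu : Ok W δ g u) (hv : Ok W δ g v)
    (hu' : (W:ℤ) < u) (hv' : v < -(W:ℤ)) :
    u + v = 0 ∨ (Ok W δ g (u + v) ∧ w W δ g (u + v) ≤ w W δ g u + w W δ g v
      ∧ (u+v).natAbs ≤ W) := by
  have hM := M_big h
  have hu2 : M W δ g - W ≤ u.natAbs ∧ u.natAbs ≤ M W δ g := by
    rcases hu with h' | h' <;> omega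
  have hv2 : M W δ g - W ≤ v.natAbs ∧ v.natAbs ≤ M W δ g := by
    rcases hv with h' | h' <;> omega
  by_cases h0 : u + v = 0
  · left; exact h0
  right
  have huv : (u + v).natAbs ≤ W := by omega
  have h1 : 1 ≤ (u + v).natAbs := by omega
  refine ⟨Or.inl ⟨h1, huv⟩, ?_, huv⟩
  have hnu : ¬ (u.natAbs ≤ W) := by omega
  have hnv : ¬ (v.natAbs ≤ W) := by omega
  simp only [w, if_pos huv, if_neg hnu, if_neg hnv]
  set tu := M W δ g - u.natAbs with htu
  set tv := M W δ g - v.natAbs with htv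
  have htuW : tu ≤ W := by omega
  have htvW : tv ≤ W := by omega
  rcases le_total tu tv with hle | hle
  · have habs : (u+v).natAbs = tv - tu := by omega
    rw [habs]
    exact h.hadm3 tu tv hle htvW
  · have habs : (u+v).natAbs = tu - tv := by omega
    rw [habs]
    calc δ (tu - tv) ≤ g tv + g tu := h.hadm3 tv tu hle htuW
    _ = g tu + g tv := by ring

lemma reduce_pair (h : Hyp W δ g) {p : Multiset ℤ} {m u v : ℤ} (hp : IsPath W δ g p m)
    (hu : u ∈ p) (hv : v ∈ p.erase u)
    (hmerge : u + v = 0 ∨ (Ok W δ g (u + v) ∧ w W δ g (u + v) ≤ w W δ g u + w W δ g v)) :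
    ∃ p', IsPath W δ g p' m ∧ Multiset.card p' < Multiset.card p ∧
      cost W δ g p' ≤ cost W δ g p := by
  set q := (p.erase u).erase v with hq
  have hpe : p = u ::ₘ v ::ₘ q := by
    rw [hq, Multiset.cons_erase hv, Multiset.cons_erase hu]
  have hqok : ∀ s ∈ q, Ok W δ g s := fun s hs =>
    hp.1 s (Multiset.mem_of_mem_erase (Multiset.mem_of_mem_erase hs))
  have hqsum : q.sum = m - u - v := by
    have := hp.2
    rw [hpe] at this
    simp only [Multiset.sum_cons] at this
    linarith
  have hcard : Multiset.card p = Multiset.card q + 2 := by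
    rw [hpe]; simp
  have hcost : cost W δ g p = w W δ g u + w W δ g v + cost W δ g q := by
    rw [hpe, cost_cons, cost_cons]; ring
  have hwu := w_pos h (hp.1 u hu)
  have hwv := w_pos h (hp.1 v (Multiset.mem_of_mem_erase hv))
  rcases hmerge with h0 | ⟨hok, hle⟩
  · refine ⟨q, ⟨hqok, by omega⟩, by omega, by linarith⟩
  · refine ⟨(u + v) ::ₘ q, ⟨?_, ?_⟩, by simp [hcard], ?_⟩
    · intro s hs
      rcases Multiset.mem_cons.mp hs with rfl | hs
      exacts [hok, hqok s hs]
    · simp [hqsum]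
    · rw [cost_cons]; linarith

lemma count_card (h : Hyp W δ g) {p : Multiset ℤ} {m : ℤ} (hp : IsPath W δ g p m)
    (c1 c2 : ℕ)
    (hc1 : c1 = Multiset.card (p.filter (fun s => (W:ℤ) < s)))
    (hc2 : c2 = Multiset.card ((p.filter (fun s => ¬ (W:ℤ) < s)).filter (fun s => s < -(W:ℤ)))) :
    ∃ c3 : ℕ, c1 + c2 + c3 = Multiset.card p ∧
      ((M W δ g : ℤ) - W) * c1 - (M W δ g : ℤ) * c2 - W * c3 ≤ m ∧
      m ≤ (M W δ g : ℤ) * c1 - ((M W δ g : ℤ) - W) * c2 + W * c3 := by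
  have hM := M_big h
  set A := p.filter (fun s => (W:ℤ) < s) with hA
  set Q := p.filter (fun s => ¬ (W:ℤ) < s) with hQ
  set B := Q.filter (fun s => s < -(W:ℤ)) with hB
  set C := Q.filter (fun s => ¬ s < -(W:ℤ)) with hC
  have hpAQ : A + Q = p := Multiset.filter_add_not _ p
  have hQBC : B + C = Q := Multiset.filter_add_not _ Q
  refine ⟨Multiset.card C, ?_, ?_, ?_⟩
  · rw [hc1, hc2, ← hpAQ, ← hQBC]; simp; ring
  all_goals {
    have hmA_lo : ∀ x ∈ A, (M W δ g : ℤ) - W ≤ x := by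
      intro x hx
      have h1 := Multiset.of_mem_filter hx
      have h2 := hp.1 x (Multiset.mem_of_mem_filter hx)
      rcases h2 with h' | h' <;> omega
    have hmA_hi : ∀ x ∈ A, x ≤ (M W δ g : ℤ) := by
      intro x hx
      have h1 := Multiset.of_mem_filter hx
      have h2 := hp.1 x (Multiset.mem_of_mem_filter hx)
      rcases h2 with h' | h' <;> omega
    have hmB_lo : ∀ x ∈ B, -(M W δ g : ℤ) ≤ x := by
      intro x hx
      have h2 := hp.1 x (Multiset.mem_of_mem_filter (Multiset.mem_of_mem_filter hx))
      rcases h2 with h' | h' <;> omega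
    have hmB_hi : ∀ x ∈ B, x ≤ -((M W δ g : ℤ) - W) := by
      intro x hx
      have h1 := Multiset.of_mem_filter hx
      have h2 := hp.1 x (Multiset.mem_of_mem_filter (Multiset.mem_of_mem_filter hx))
      rcases h2 with h' | h' <;> omega
    have hmC_lo : ∀ x ∈ C, -(W:ℤ) ≤ x := by
      intro x hx
      have h1 := Multiset.of_mem_filter hx
      omega
    have hmC_hi : ∀ x ∈ C, x ≤ (W:ℤ) := by
      intro x hx
      have h1 := Multiset.of_mem_filter (Multiset.mem_of_mem_filter hx)
      omega
    have hsum : m = A.sum + B.sum + C.sum := by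
      rw [← hp.2, ← hpAQ, ← hQBC]
      simp [Multiset.sum_add]
      ring
    have bA1 : Multiset.card A • ((M W δ g : ℤ) - W) ≤ A.sum := Multiset.card_nsmul_le_sum hmA_lo
    have bA2 : A.sum ≤ Multiset.card A • (M W δ g : ℤ) := Multiset.sum_le_card_nsmul _ _ hmA_hi
    have bB1 : Multiset.card B • (-(M W δ g : ℤ)) ≤ B.sum := Multiset.card_nsmul_le_sum hmB_lo
    have bB2 : B.sum ≤ Multiset.card B • (-((M W δ g : ℤ) - W)) := Multiset.sum_le_card_nsmul _ _ hmB_hi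
    have bC1 : Multiset.card C • (-(W:ℤ)) ≤ C.sum := Multiset.card_nsmul_le_sum hmC_lo
    have bC2 : C.sum ≤ Multiset.card C • (W:ℤ) := Multiset.sum_le_card_nsmul _ _ hmC_hi
    simp only [nsmul_eq_mul] at bA1 bA2 bB1 bB2 bC1 bC2
    rw [hc1, hc2]
    push_cast
    nlinarith [bA1, bA2, bB1, bB2, bC1, bC2]
  }


lemma card_B_zero {p : Multiset ℤ} (h2 : ¬ ∃ v ∈ p, v < -(W:ℤ)) :
    Multiset.card ((p.filter (fun s => ¬ (W:ℤ) < s)).filter (fun s => s < -(W:ℤ))) = 0 := by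
  rw [Multiset.card_eq_zero]
  rw [Multiset.filter_eq_nil]
  intro a ha
  exact fun hlt => h2 ⟨a, Multiset.mem_of_mem_filter ha, hlt⟩

lemma card_A_pos {p : Multiset ℤ} {u : ℤ} (hu : u ∈ p) (hu' : (W:ℤ) < u) :
    1 ≤ Multiset.card (p.filter (fun s => (W:ℤ) < s)) := by
  have : u ∈ p.filter (fun s => (W:ℤ) < s) := Multiset.mem_filter.mpr ⟨hu, hu'⟩
  have := Multiset.card_pos_iff_exists_mem.mpr ⟨u, this⟩
  omega

lemma claimL (h : Hyp W δ g) : ∀ n (p : Multiset ℤ) (m : ℤ), Multiset.card p = n →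
    IsPath W δ g p m → m.natAbs ≤ W → δ m.natAbs ≤ cost W δ g p := by
  intro n
  induction n using Nat.strong_induction_on with
  | _ n ih =>
  intro p m hcard hp hm
  have hM := M_big h
  by_cases h1 : ∃ u ∈ p, (W:ℤ) < u
  · by_cases h2 : ∃ v ∈ p, v < -(W:ℤ)
    · -- merge a big+ with a big-
      obtain ⟨u, hu, hu'⟩ := h1
      obtain ⟨v, hv, hv'⟩ := h2
      have hne : v ≠ u := by omega
      have hv2 : v ∈ p.erase u := (Multiset.mem_erase_of_ne hne).mpr hv
      have hmerge := big_pair h (hp.1 u hu) (hp.1 v hv) hu' hv'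
      obtain ⟨p', hp', hcard', hcost'⟩ := reduce_pair h hp hu hv2
        (by rcases hmerge with h' | ⟨a, b, c⟩; exacts [Or.inl h', Or.inr ⟨a, b⟩])
      exact le_trans (ih _ (by omega) p' m rfl hp' hm) hcost'
    · -- counting: big+ present, no big-
      obtain ⟨u, hu, hu'⟩ := h1
      obtain ⟨c3, hsum, hlo, hhi⟩ := count_card h hp _ _ rfl rfl
      rw [card_B_zero h2] at hsum hlo hhi
      have hc1 := card_A_pos hu hu'
      have hNB : NB W δ g ≤ c3 := by
        have hMeq := M_eq (W := W) (δ := δ) (g := g)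
        have hm' : m ≤ (W:ℤ) := by omega
        have hWpos : 0 < W := h.hW
        set c1 := Multiset.card (Multiset.filter (fun s => (W:ℤ) < s) p)
        have e1 : ((M W δ g : ℤ) - W) * 1 ≤ ((M W δ g : ℤ) - W) * c1 := by
          apply mul_le_mul_of_nonneg_left (by exact_mod_cast hc1) (by omega)
        by_contra hcon
        push_neg at hcon
        have : (W:ℤ) * c3 + W ≤ (W:ℤ) * NB W δ g := by
          have : (c3:ℤ) + 1 ≤ NB W δ g := by exact_mod_cast hcon
          nlinarith [this, (by exact_mod_cast hWpos : (0:ℤ) < W)]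
        omega
      have hcards : NB W δ g ≤ Multiset.card p := by omega
      have := P_lt_cost_of_card h hp.1 hcards
      have := le_P (delta_mem_vals (δ := δ) (g := g) hm)
      linarith
  · by_cases h2 : ∃ v ∈ p, v < -(W:ℤ)
    · -- counting: big- present, no big+
      obtain ⟨v, hv, hv'⟩ := h2
      obtain ⟨c3, hsum, hlo, hhi⟩ := count_card h hp _ _ rfl rfl
      have hA0 : Multiset.card (p.filter (fun s => (W:ℤ) < s)) = 0 := by
        rw [Multiset.card_eq_zero, Multiset.filter_eq_nil]
        intro a ha
        exact fun hlt => h1 ⟨a, ha, hlt⟩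
      rw [hA0] at hsum hlo hhi
      have hc2 : 1 ≤ Multiset.card ((p.filter (fun s => ¬ (W:ℤ) < s)).filter
          (fun s => s < -(W:ℤ))) := by
        have hvQ : v ∈ p.filter (fun s => ¬ (W:ℤ) < s) :=
          Multiset.mem_filter.mpr ⟨hv, by omega⟩
        have : v ∈ (p.filter (fun s => ¬ (W:ℤ) < s)).filter (fun s => s < -(W:ℤ)) :=
          Multiset.mem_filter.mpr ⟨hvQ, hv'⟩
        have := Multiset.card_pos_iff_exists_mem.mpr ⟨v, this⟩
        omega
      have hNB : NB W δ g ≤ c3 := by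
        have hMeq := M_eq (W := W) (δ := δ) (g := g)
        have hm' : -(W:ℤ) ≤ m := by omega
        have hWpos : 0 < W := h.hW
        set c2 := Multiset.card ((p.filter (fun s => ¬ (W:ℤ) < s)).filter (fun s => s < -(W:ℤ)))
        have e1 : ((M W δ g : ℤ) - W) * 1 ≤ ((M W δ g : ℤ) - W) * c2 := by
          apply mul_le_mul_of_nonneg_left (by exact_mod_cast hc2) (by omega)
        by_contra hcon
        push_neg at hcon
        have : (W:ℤ) * c3 + W ≤ (W:ℤ) * NB W δ g := by
          have : (c3:ℤ) + 1 ≤ NB W δ g := by exact_mod_cast hcon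
          nlinarith [this, (by exact_mod_cast hWpos : (0:ℤ) < W)]
        omega
      have hcards : NB W δ g ≤ Multiset.card p := by omega
      have := P_lt_cost_of_card h hp.1 hcards
      have := le_P (delta_mem_vals (δ := δ) (g := g) hm)
      linarith
    · -- all small
      push_neg at h1 h2
      have hsmall : ∀ s ∈ p, s.natAbs ≤ W := by
        intro s hs
        have := h1 s hs
        have := h2 s hs
        omega
      by_cases hc0 : Multiset.card p = 0
      · have hp0 : p = 0 := by rw [← Multiset.card_eq_zero]; omega
        subst hp0
        have hm0 : m = 0 := by have := hp.2; simpa using this.symm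
        subst hm0
        simp [cost, h.hδ0]
      by_cases hc1 : Multiset.card p = 1
      · obtain ⟨a, hpa⟩ := Multiset.card_eq_one.mp hc1
        have hma : a = m := by
          have := hp.2; rw [hpa] at this; simpa using this
        have key : cost W δ g p = w W δ g m := by rw [hpa, hma]; simp [cost]
        rw [key]
        simp [w, if_pos hm]
      -- card ≥ 2
      have hc2 : 2 ≤ Multiset.card p := by omega
      by_cases hmix : (∃ a ∈ p, 0 < a) ∧ (∃ b ∈ p, b < 0)
      · obtain ⟨⟨a, hap, ha0⟩, ⟨b, hbp, hb0⟩⟩ := hmix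
        have hne : b ≠ a := by omega
        have hb' : b ∈ p.erase a := (Multiset.mem_erase_of_ne hne).mpr hbp
        have habW : (a + b).natAbs ≤ W := by
          have := hsmall a hap; have := hsmall b hbp; omega
        obtain ⟨p', hp', hcard', hcost'⟩ := reduce_pair h hp hap hb'
          (small_pair h (hsmall a hap) (hsmall b hbp) habW)
        exact le_trans (ih _ (by omega) p' m rfl hp' hm) hcost'
      · have hsame : (∀ x ∈ p, 0 ≤ x) ∨ (∀ x ∈ p, x ≤ 0) := by
          rcases not_and_or.mp hmix with hc | hc
          · push_neg at hc
            right; intro x hx; exact hc x hx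
          · push_neg at hc
            left; intro x hx; exact hc x hx
        obtain ⟨u, hu⟩ := Multiset.card_pos_iff_exists_mem.mp (show 0 < Multiset.card p by omega)
        obtain ⟨t, hpt⟩ := Multiset.exists_cons_of_mem hu
        have htcard : Multiset.card p = Multiset.card t + 1 := by
          rw [hpt]; simp
        obtain ⟨v, hvt⟩ := Multiset.card_pos_iff_exists_mem.mp
          (show 0 < Multiset.card t by omega)
        have hv : v ∈ p.erase u := by
          rw [hpt, Multiset.erase_cons_head]; exact hvt
        have hvp : v ∈ p := Multiset.mem_of_mem_erase hv
        have hsum3 : u + v + ((p.erase u).erase v).sum = m := by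
          have h5 : p = u ::ₘ v ::ₘ (p.erase u).erase v := by
            rw [Multiset.cons_erase hv, Multiset.cons_erase hu]
          have := hp.2
          rw [h5] at this
          simp only [Multiset.sum_cons] at this
          linarith
        have hrestmem : ∀ x ∈ (p.erase u).erase v, x ∈ p := fun x hx =>
          Multiset.mem_of_mem_erase (Multiset.mem_of_mem_erase hx)
        have huvW : (u + v).natAbs ≤ W := by
          rcases hsame with hall | hall
          · have hrest : 0 ≤ ((p.erase u).erase v).sum :=
              Multiset.sum_nonneg (fun x hx => hall x (hrestmem x hx))
            have := hall u hu; have := hall v hvp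
            omega
          · have hrest : ((p.erase u).erase v).sum ≤ 0 := by
              have : ∀ x ∈ ((p.erase u).erase v).map Neg.neg, 0 ≤ x := by
                intro x hx
                obtain ⟨y, hy, rfl⟩ := Multiset.mem_map.mp hx
                have := hall y (hrestmem y hy); omega
              have hneg := Multiset.sum_nonneg this
              rw [Multiset.sum_map_neg'] at hneg
              omega
            have := hall u hu; have := hall v hvp
            omega
        obtain ⟨p', hp', hcard', hcost'⟩ := reduce_pair h hp hu hv
          (small_pair h (hsmall u hu) (hsmall v hvp) huvW)
        exact le_trans (ih _ (by omega) p' m rfl hp' hm) hcost'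


lemma claimH (h : Hyp W δ g) : ∀ n (p : Multiset ℤ) (m : ℤ), Multiset.card p = n →
    IsPath W δ g p m → (M W δ g : ℤ) - W ≤ m → m ≤ (M W δ g : ℤ) →
    g (M W δ g - m.natAbs) ≤ cost W δ g p := by
  intro n
  induction n using Nat.strong_induction_on with
  | _ n ih =>
  intro p m hcard hp hm1 hm2
  have hM := M_big h
  have hgP : g (M W δ g - m.natAbs) ≤ P W δ g :=
    le_P (g_mem_vals (by omega))
  by_cases h1 : ∃ u ∈ p, (W:ℤ) < u
  · by_cases h2 : ∃ v ∈ p, v < -(W:ℤ)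
    · obtain ⟨u, hu, hu'⟩ := h1
      obtain ⟨v, hv, hv'⟩ := h2
      have hne : v ≠ u := by omega
      have hv2 : v ∈ p.erase u := (Multiset.mem_erase_of_ne hne).mpr hv
      have hmerge := big_pair h (hp.1 u hu) (hp.1 v hv) hu' hv'
      obtain ⟨p', hp', hcard', hcost'⟩ := reduce_pair h hp hu hv2
        (by rcases hmerge with h' | ⟨a, b, c⟩; exacts [Or.inl h', Or.inr ⟨a, b⟩])
      exact le_trans (ih _ (by omega) p' m rfl hp' hm1 hm2) hcost'
    · -- no big negative steps
      obtain ⟨c3, hsum, hlo, hhi⟩ := count_card h hp _ _ rfl rfl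
      rw [card_B_zero h2] at hsum hlo hhi
      set c1 := Multiset.card (Multiset.filter (fun s => (W:ℤ) < s) p) with hc1def
      have hMeq := M_eq (W := W) (δ := δ) (g := g)
      have hWpos : 0 < W := h.hW
      by_cases hc1a : c1 = 1
      · -- exactly one big positive step
        rw [hc1a] at hsum hlo hhi
        have hcardA : Multiset.card (Multiset.filter (fun s => (W:ℤ) < s) p) = 1 := by
          rw [← hc1def]; exact hc1a
        obtain ⟨u, hAu⟩ := Multiset.card_eq_one.mp hcardA
        have hup : u ∈ p := by
          have : u ∈ Multiset.filter (fun s => (W:ℤ) < s) p := by rw [hAu]; simp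
          exact Multiset.mem_of_mem_filter this
        have huW : (W:ℤ) < u := by
          have : u ∈ Multiset.filter (fun s => (W:ℤ) < s) p := by rw [hAu]; simp
          exact Multiset.of_mem_filter this
        have huOk := hp.1 u hup
        have hublock : M W δ g - W ≤ u.natAbs ∧ u.natAbs ≤ M W δ g := by
          rcases huOk with h' | h' <;> omega
        have hrest : ∀ s ∈ p.erase u, s.natAbs ≤ W := by
          intro s hs
          have hsp : s ∈ p := Multiset.mem_of_mem_erase hs
          have hnn : ¬ (s < -(W:ℤ)) := fun hc => h2 ⟨s, hsp, hc⟩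
          by_contra hcon
          have hsW : (W:ℤ) < s := by omega
          by_cases hsu : s = u
          · subst hsu
            have h6 := Multiset.count_pos.mpr hs
            have h7 : Multiset.count s (p.erase s) = Multiset.count s p - 1 :=
              Multiset.count_erase_self s p
            have hcnt2 : 2 ≤ Multiset.count s p := by omega
            have h8 : 2 ≤ Multiset.count s (Multiset.filter (fun x => (W:ℤ) < x) p) := by
              rw [Multiset.count_filter_of_pos hsW]; exact hcnt2
            rw [hAu] at h8
            have h9 : Multiset.count s ({s} : Multiset ℤ) = 1 := by simp
            omega
          · have h6 : s ∈ Multiset.filter (fun x => (W:ℤ) < x) p :=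
              Multiset.mem_filter.mpr ⟨hsp, hsW⟩
            rw [hAu] at h6
            simp at h6
            exact hsu h6
        set q := p.erase u with hqdef
        have hqok : ∀ s ∈ q, Ok W δ g s := fun s hs => hp.1 s (Multiset.mem_of_mem_erase hs)
        have hqsum : q.sum = m - u := by
          have hpe : p = u ::ₘ q := (Multiset.cons_erase hup).symm
          have := hp.2
          rw [hpe] at this
          simp only [Multiset.sum_cons] at this
          linarith
        have hqpath : IsPath W δ g q (m - u) := ⟨hqok, hqsum⟩
        have hmu : (m - u).natAbs ≤ W := by omega
        have hL := claimL h (Multiset.card q) q (m - u) rfl hqpath hmu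
        have hcostp : cost W δ g p = w W δ g u + cost W δ g q := by
          have hpe : p = u ::ₘ q := (Multiset.cons_erase hup).symm
          rw [hpe, cost_cons]
        have hnu : ¬ (u.natAbs ≤ W) := by omega
        set tu := M W δ g - u.natAbs with htudef
        set tm := M W δ g - m.natAbs with htmdef
        have hwu : w W δ g u = g tu := by simp only [w, if_neg hnu]; rfl
        have htuW : tu ≤ W := by omega
        have htmW : tm ≤ W := by omega
        rcases le_total tm tu with hle | hle
        · have habs : (m - u).natAbs = tu - tm := by omega
          have hadm := h.hadm2 tm tu hle htuW
          rw [hcostp, hwu]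
          rw [habs] at hL
          linarith
        · have habs : (m - u).natAbs = tm - tu := by omega
          have hadm := h.hadm1 tu tm hle htmW
          rw [hcostp, hwu]
          rw [habs] at hL
          linarith
      · -- c1 = 0 or c1 ≥ 2 : counting
        have hNB : NB W δ g ≤ c3 := by
          rcases Nat.lt_or_ge c1 1 with hcc | hcc
          · have hc10 : c1 = 0 := by omega
            rw [hc10] at hhi
            norm_num at hhi
            by_contra hcon
            push_neg at hcon
            have h5 : (c3:ℤ) + 1 ≤ NB W δ g := by exact_mod_cast hcon
            nlinarith [h5, (by exact_mod_cast hWpos : (0:ℤ) < W)]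
          · have hcc2 : 2 ≤ c1 := by omega
            norm_num at hlo
            have e1 : ((M W δ g : ℤ) - W) * 2 ≤ ((M W δ g : ℤ) - W) * c1 := by
              apply mul_le_mul_of_nonneg_left (by exact_mod_cast hcc2) (by omega)
            by_contra hcon
            push_neg at hcon
            have h5 : (c3:ℤ) + 1 ≤ NB W δ g := by exact_mod_cast hcon
            nlinarith [h5, (by exact_mod_cast hWpos : (0:ℤ) < W)]
        have hcards : NB W δ g ≤ Multiset.card p := by omega
        have := P_lt_cost_of_card h hp.1 hcards
        linarith
  · -- no big positive step at all
    obtain ⟨c3, hsum, hlo, hhi⟩ := count_card h hp _ _ rfl rfl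
    have hA0 : Multiset.card (p.filter (fun s => (W:ℤ) < s)) = 0 := by
      rw [Multiset.card_eq_zero, Multiset.filter_eq_nil]
      intro a ha
      exact fun hlt => h1 ⟨a, ha, hlt⟩
    rw [hA0] at hsum hlo hhi
    norm_num at hlo hhi
    have hMeq := M_eq (W := W) (δ := δ) (g := g)
    have hWpos : 0 < W := h.hW
    have hNB : NB W δ g ≤ c3 := by
      set c2 := Multiset.card ((p.filter (fun s => ¬ (W:ℤ) < s)).filter (fun s => s < -(W:ℤ)))
      have hMW : (0:ℤ) ≤ (M W δ g : ℤ) - W := by omega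
      have hc2nn : (0:ℤ) ≤ ((M W δ g : ℤ) - W) * c2 :=
        mul_nonneg hMW (by positivity)
      by_contra hcon
      push_neg at hcon
      have h5 : (c3:ℤ) + 1 ≤ NB W δ g := by exact_mod_cast hcon
      nlinarith [h5, (by exact_mod_cast hWpos : (0:ℤ) < W), hc2nn]
    have hcards : NB W δ g ≤ Multiset.card p := by omega
    have := P_lt_cost_of_card h hp.1 hcards
    linarith


lemma dd_pos (h : Hyp W δ g) {m : ℤ} (hm : m ≠ 0) : 0 < dd W δ g m := by
  obtain ⟨p, hp, hc⟩ := dd_exists h m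
  have hpne : p ≠ 0 := by
    intro h0
    rw [h0] at hp
    exact hm (by simpa using hp.2.symm)
  obtain ⟨u, hu⟩ := Multiset.exists_mem_of_ne_zero hpne
  have hpe : p = u ::ₘ p.erase u := (Multiset.cons_erase hu).symm
  have hkey : cost W δ g p = w W δ g u + cost W δ g (p.erase u) := by
    nth_rewrite 1 [hpe]
    rw [cost_cons]
  have h1 := w_pos h (hp.1 u hu)
  have h2 : 0 ≤ cost W δ g (p.erase u) :=
    cost_nonneg h (fun s hs => hp.1 s (Multiset.mem_of_mem_erase hs))
  rw [← hc, hkey]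
  linarith

lemma dd_low (h : Hyp W δ g) {k : ℕ} (hk : k ≤ W) : dd W δ g (k:ℤ) = δ k := by
  rcases Nat.eq_zero_or_pos k with rfl | hk1
  · simpa [h.hδ0] using dd_zero h
  · have hOk : Ok W δ g (k:ℤ) := Or.inl ⟨by omega, by omega⟩
    have hpath : IsPath W δ g {(k:ℤ)} (k:ℤ) := ⟨by simpa using hOk, by simp⟩
    have hle : dd W δ g (k:ℤ) ≤ δ k := by
      have := dd_le h hpath
      simpa [cost, w, show (k:ℤ).natAbs = k by omega, hk] using this
    obtain ⟨p, hp, hc⟩ := dd_exists h (k:ℤ)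
    have hge := claimL h (Multiset.card p) p (k:ℤ) rfl hp (by omega)
    rw [hc] at hge
    have : (k:ℤ).natAbs = k := by omega
    rw [this] at hge
    linarith

lemma dd_block (h : Hyp W δ g) {t : ℕ} (ht : t ≤ W) :
    dd W δ g ((M W δ g : ℤ) - t) = g t := by
  have hM := M_big h
  set m : ℤ := (M W δ g : ℤ) - t with hmdef
  have hnat : m.natAbs = M W δ g - t := by omega
  have hOk : Ok W δ g m := Or.inr ⟨by omega, by omega⟩
  have hpath : IsPath W δ g {m} m := ⟨by simpa using hOk, by simp⟩
  have hle : dd W δ g m ≤ g t := by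
    have := dd_le h hpath
    have hw : w W δ g m = g t := by
      have hno : ¬ (m.natAbs ≤ W) := by omega
      simp only [w, if_neg hno]
      congr 1
      omega
    simpa [cost, hw] using this
  obtain ⟨p, hp, hc⟩ := dd_exists h m
  have hge := claimH h (Multiset.card p) p m rfl hp (by omega) (by omega)
  rw [hc] at hge
  have : M W δ g - m.natAbs = t := by omega
  rw [this] at hge
  linarith

theorem blockExt (h : Hyp W δ g) :
    ∃ (M' : ℕ) (δ' : ℕ → ℚ),
      2 * W < M' ∧
      (∀ k, k ≤ W → δ' k = δ k) ∧
      (∀ t, t ≤ W → δ' (M' - t) = g t) ∧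
      δ' 0 = 0 ∧
      (∀ k, k ≠ 0 → 0 < δ' k) ∧
      (∀ a b, δ' (a + b) ≤ δ' a + δ' b) ∧
      (∀ a b, δ' a ≤ δ' (a + b) + δ' b) := by
  have hM := M_big h
  refine ⟨M W δ g, fun k => dd W δ g (k:ℤ), hM, ?_, ?_, ?_, ?_, ?_, ?_⟩
  · intro k hk; exact dd_low h hk
  · intro t ht
    show dd W δ g ((M W δ g - t : ℕ) : ℤ) = g t
    have : ((M W δ g - t : ℕ) : ℤ) = (M W δ g : ℤ) - t := by omega
    rw [this]
    exact dd_block h ht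
  · simpa using dd_zero h
  · intro k hk
    exact dd_pos h (by exact_mod_cast hk)
  · intro a b
    show dd W δ g ((a + b : ℕ) : ℤ) ≤ dd W δ g (a:ℤ) + dd W δ g (b:ℤ)
    have : ((a + b : ℕ) : ℤ) = (a : ℤ) + b := by push_cast; ring
    rw [this]
    exact dd_add h a b
  · intro a b
    show dd W δ g (a:ℤ) ≤ dd W δ g ((a + b : ℕ) : ℤ) + dd W δ g (b:ℤ)
    have : ((a + b : ℕ) : ℤ) = (a : ℤ) + b := by push_cast; ring
    rw [this]
    exact dd_rev h a b


section PartB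

variable {X : Type*} [MetricSpace X]

noncomputable def rdist (hX : IsRationalUrysohn X) (x y : X) : ℚ :=
  Classical.choose (hX.2.2.1 x y)

lemma rdist_cast (hX : IsRationalUrysohn X) (x y : X) :
    ((rdist hX x y : ℚ) : ℝ) = dist x y :=
  (Classical.choose_spec (hX.2.2.1 x y)).symm

lemma ext_at (hX : IsRationalUrysohn X) (s : Finset ℤ) (ψ : ℤ → X) (γ : ℤ → ℚ)
    (hinj : ∀ i ∈ s, ∀ j ∈ s, ψ i = ψ j → i = j)
    (hnn : ∀ i ∈ s, 0 ≤ γ i)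
    (hcond : ∀ i ∈ s, ∀ j ∈ s, |(γ i : ℝ) - (γ j : ℝ)| ≤ dist (ψ i) (ψ j) ∧
      dist (ψ i) (ψ j) ≤ (γ i : ℝ) + (γ j : ℝ)) :
    ∃ z : X, ∀ i ∈ s, dist z (ψ i) = ((γ i : ℚ) : ℝ) := by
  classical
  set A : Finset X := s.image ψ with hA
  set G : X → ℚ := fun p => if h : ∃ i, i ∈ s ∧ ψ i = p then γ (Classical.choose h) else 0
    with hG
  have hGeq : ∀ i ∈ s, G (ψ i) = γ i := by
    intro i hi
    have hex : ∃ j, j ∈ s ∧ ψ j = ψ i := ⟨i, hi, rfl⟩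
    have hj := Classical.choose_spec hex
    have : Classical.choose hex = i := hinj _ hj.1 _ hi hj.2
    simp only [hG, dif_pos hex, this]
  have h1 : ∀ a ∈ A, 0 ≤ G a := by
    intro a ha
    obtain ⟨i, hi, rfl⟩ := Finset.mem_image.mp ha
    rw [hGeq i hi]
    exact hnn i hi
  have h2 : ∀ a ∈ A, ∀ b ∈ A, |(G a : ℝ) - (G b : ℝ)| ≤ dist a b ∧
      dist a b ≤ (G a : ℝ) + (G b : ℝ) := by
    intro a ha b hb
    obtain ⟨i, hi, rfl⟩ := Finset.mem_image.mp ha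
    obtain ⟨j, hj, rfl⟩ := Finset.mem_image.mp hb
    rw [hGeq i hi, hGeq j hj]
    exact hcond i hi j hj
  obtain ⟨z, hz⟩ := hX.2.2.2 A G h1 h2
  refine ⟨z, fun i hi => ?_⟩
  rw [← hGeq i hi]
  exact hz (ψ i) (Finset.mem_image_of_mem ψ hi)

structure PState (X : Type*) [MetricSpace X] where
  lo : ℤ
  hi : ℤ
  xs : ℤ → X
  δf : ℕ → ℚ
  hlo : lo ≤ 0
  hhi : 0 ≤ hi
  hlen : 1 ≤ hi - lo
  hdist : ∀ i j, lo ≤ i → i ≤ hi → lo ≤ j → j ≤ hi →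
    dist (xs i) (xs j) = ((δf (i - j).natAbs : ℚ) : ℝ)
  hpos : ∀ k : ℕ, k ≠ 0 → (k : ℤ) ≤ hi - lo → 0 < δf k

namespace PState

variable (S : PState X)

lemma δf_zero : S.δf 0 = 0 := by
  have := S.hdist 0 0 S.hlo S.hhi S.hlo S.hhi
  simp at this
  exact_mod_cast this.symm

lemma xs_inj {i j : ℤ} (hi1 : S.lo ≤ i) (hi2 : i ≤ S.hi) (hj1 : S.lo ≤ j)
    (hj2 : j ≤ S.hi) (hij : S.xs i = S.xs j) : i = j := by
  by_contra hne
  have h1 := S.hdist i j hi1 hi2 hj1 hj2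
  rw [hij] at h1
  simp at h1
  have h2 : (0:ℝ) < ((S.δf (i - j).natAbs : ℚ) : ℝ) := by
    exact_mod_cast S.hpos (i - j).natAbs (by omega) (by omega)
  rw [← h1] at h2
  simp at h2

lemma δf_nonneg {k : ℕ} (hk : (k : ℤ) ≤ S.hi - S.lo) : 0 ≤ S.δf k := by
  rcases Nat.eq_zero_or_pos k with rfl | h
  · rw [S.δf_zero]
  · exact le_of_lt (S.hpos k (by omega) hk)

def mirror (S : PState X) : PState X where
  lo := -S.hi
  hi := -S.lo
  xs := fun i => S.xs (-i)
  δf := S.δf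
  hlo := by have := S.hhi; omega
  hhi := by have := S.hlo; omega
  hlen := by have := S.hlen; omega
  hdist := by
    intro i j h1 h2 h3 h4
    have := S.hdist (-i) (-j) (by omega) (by omega) (by omega) (by omega)
    rw [this]
    congr 2
    omega
  hpos := by
    intro k hk hk2
    exact S.hpos k hk (by omega)

lemma fresh_exists (hX : IsRationalUrysohn X) (S : PState X) :
    ∃ z : X, ∀ i, S.lo ≤ i → i ≤ S.hi → z ≠ S.xs i := by
  obtain ⟨z, hz⟩ := ext_at hX (Finset.Icc S.lo S.hi) S.xs
      (fun i => rdist hX (S.xs S.lo) (S.xs i) + 1)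
      (by
        intro i hi j hj heq
        rw [Finset.mem_Icc] at hi hj
        exact S.xs_inj hi.1 hi.2 hj.1 hj.2 heq)
      (by
        intro i hi
        have h0 : (0:ℝ) ≤ ((rdist hX (S.xs S.lo) (S.xs i) : ℚ) : ℝ) := by
          rw [rdist_cast]; exact dist_nonneg
        have : (0:ℚ) ≤ rdist hX (S.xs S.lo) (S.xs i) := by exact_mod_cast h0
        show (0:ℚ) ≤ rdist hX (S.xs S.lo) (S.xs i) + 1
        linarith)
      (by
        intro i hi j hj
        rw [Finset.mem_Icc] at hi hj
        push_cast
        rw [rdist_cast, rdist_cast]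
        constructor
        · have h1 := abs_dist_sub_le (S.xs i) (S.xs j) (S.xs S.lo)
          rw [dist_comm (S.xs i) (S.xs S.lo), dist_comm (S.xs j) (S.xs S.lo)] at h1
          have h2 : dist (S.xs S.lo) (S.xs i) + 1 - (dist (S.xs S.lo) (S.xs j) + 1) =
              dist (S.xs S.lo) (S.xs i) - dist (S.xs S.lo) (S.xs j) := by ring
          rw [h2]
          exact h1
        · have h3 : dist (S.xs i) (S.xs j) ≤ dist (S.xs i) (S.xs S.lo) +
              dist (S.xs S.lo) (S.xs j) := dist_triangle _ _ _
          rw [dist_comm (S.xs i) (S.xs S.lo)] at h3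
          linarith)
  refine ⟨z, fun i h1 h2 heq => ?_⟩
  have hthis := hz i (Finset.mem_Icc.mpr ⟨h1, h2⟩)
  have h0 : (0:ℝ) ≤ ((rdist hX (S.xs S.lo) (S.xs i) : ℚ) : ℝ) := by
    rw [rdist_cast]; exact dist_nonneg
  rw [← heq] at hthis h0
  simp only [dist_self] at hthis
  push_cast at hthis
  linarith

end PState

lemma place_exists (hX : IsRationalUrysohn X) (S : PState X) (y : X)
    (hy : ∀ i, S.lo ≤ i → i ≤ S.hi → y ≠ S.xs i) :
    ∃ S' : PState X, S'.lo = S.lo ∧ S.hi < S'.hi ∧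
      (∀ i, S.lo ≤ i → i ≤ S.hi → S'.xs i = S.xs i) ∧
      S'.xs S'.hi = y := by
  classical
  have hd := S.hdist
  set W : ℕ := (S.hi - S.lo).toNat with hWdef
  have hW1 : 1 ≤ W := by have := S.hlen; omega
  have hWspan : (W : ℤ) = S.hi - S.lo := by have := S.hlen; omega
  set gf : ℕ → ℚ := fun t => rdist hX y (S.xs (S.lo + t)) with hgfdef
  have hgcast : ∀ t : ℕ, ((gf t : ℚ) : ℝ) = dist y (S.xs (S.lo + t)) := by
    intro t
    simp only [hgfdef]
    exact rdist_cast hX _ _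
  have h : Hyp W S.δf gf := by
    constructor
    · exact hW1
    · exact S.δf_zero
    · intro k h1 h2
      exact S.hpos k (by omega) (by omega)
    · -- htri
      intro a b hab
      have e1 := hd (S.lo + ((a:ℤ)+b)) S.lo (by omega) (by omega) le_rfl (by omega)
      have e2 := hd (S.lo + (a:ℤ)) S.lo (by omega) (by omega) le_rfl (by omega)
      have e3 := hd (S.lo + ((a:ℤ)+b)) (S.lo + (a:ℤ)) (by omega) (by omega) (by omega) (by omega)
      have n1 : ((S.lo + ((a:ℤ)+b)) - S.lo).natAbs = a + b := by omega
      have n2 : ((S.lo + (a:ℤ)) - S.lo).natAbs = a := by omega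
      have n3 : ((S.lo + ((a:ℤ)+b)) - (S.lo + (a:ℤ))).natAbs = b := by omega
      rw [n1] at e1; rw [n2] at e2; rw [n3] at e3
      have tr := dist_triangle (S.xs (S.lo + ((a:ℤ)+b))) (S.xs (S.lo + (a:ℤ))) (S.xs S.lo)
      rw [e1, e2, e3] at tr
      have : ((S.δf (a+b) : ℚ) : ℝ) ≤ ((S.δf a : ℚ) : ℝ) + ((S.δf b : ℚ) : ℝ) := by
        linarith
      exact_mod_cast this
    · -- hrev
      intro a b hab
      have e1 := hd (S.lo + (a:ℤ)) S.lo (by omega) (by omega) le_rfl (by omega)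
      have e2 := hd (S.lo + (a:ℤ)) (S.lo + ((a:ℤ)+b)) (by omega) (by omega) (by omega) (by omega)
      have e3 := hd (S.lo + ((a:ℤ)+b)) S.lo (by omega) (by omega) le_rfl (by omega)
      have n1 : ((S.lo + (a:ℤ)) - S.lo).natAbs = a := by omega
      have n2 : ((S.lo + (a:ℤ)) - (S.lo + ((a:ℤ)+b))).natAbs = b := by omega
      have n3 : ((S.lo + ((a:ℤ)+b)) - S.lo).natAbs = a + b := by omega
      rw [n1] at e1; rw [n2] at e2; rw [n3] at e3
      have tr := dist_triangle (S.xs (S.lo + (a:ℤ))) (S.xs (S.lo + ((a:ℤ)+b))) (S.xs S.lo)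
      rw [e1, e2, e3] at tr
      have : ((S.δf a : ℚ) : ℝ) ≤ ((S.δf (a+b) : ℚ) : ℝ) + ((S.δf b : ℚ) : ℝ) := by
        linarith
      exact_mod_cast this
    · -- hgpos
      intro t ht
      have h1 : (0:ℝ) < dist y (S.xs (S.lo + t)) :=
        dist_pos.mpr (hy _ (by omega) (by omega))
      rw [← hgcast t] at h1
      exact_mod_cast h1
    · -- hadm1
      intro a b hab hbW
      have e1 := hgcast b
      have e2 := hgcast a
      have e3 := hd (S.lo + (a:ℤ)) (S.lo + (b:ℤ)) (by omega) (by omega) (by omega) (by omega)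
      have n3 : ((S.lo + (a:ℤ)) - (S.lo + (b:ℤ))).natAbs = b - a := by omega
      rw [n3] at e3
      have tr := dist_triangle y (S.xs (S.lo + (a:ℤ))) (S.xs (S.lo + (b:ℤ)))
      rw [e3] at tr
      have : ((gf b : ℚ) : ℝ) ≤ ((gf a : ℚ) : ℝ) + ((S.δf (b-a) : ℚ) : ℝ) := by
        rw [e1, e2]; linarith
      exact_mod_cast this
    · -- hadm2
      intro a b hab hbW
      have e1 := hgcast b
      have e2 := hgcast a
      have e3 := hd (S.lo + (b:ℤ)) (S.lo + (a:ℤ)) (by omega) (by omega) (by omega) (by omega)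
      have n3 : ((S.lo + (b:ℤ)) - (S.lo + (a:ℤ))).natAbs = b - a := by omega
      rw [n3] at e3
      have tr := dist_triangle y (S.xs (S.lo + (b:ℤ))) (S.xs (S.lo + (a:ℤ)))
      rw [e3] at tr
      have : ((gf a : ℚ) : ℝ) ≤ ((gf b : ℚ) : ℝ) + ((S.δf (b-a) : ℚ) : ℝ) := by
        rw [e1, e2]; linarith
      exact_mod_cast this
    · -- hadm3
      intro a b hab hbW
      have e1 := hgcast a
      have e2 := hgcast b
      have e3 := hd (S.lo + (a:ℤ)) (S.lo + (b:ℤ)) (by omega) (by omega) (by omega) (by omega)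
      have n3 : ((S.lo + (a:ℤ)) - (S.lo + (b:ℤ))).natAbs = b - a := by omega
      rw [n3] at e3
      have tr := dist_triangle (S.xs (S.lo + (a:ℤ))) y (S.xs (S.lo + (b:ℤ)))
      rw [e3, dist_comm (S.xs (S.lo + (a:ℤ))) y] at tr
      have : ((S.δf (b-a) : ℚ) : ℝ) ≤ ((gf a : ℚ) : ℝ) + ((gf b : ℚ) : ℝ) := by
        rw [e1, e2]; linarith
      exact_mod_cast this
  obtain ⟨M', δ', hM', hlow, hblock, hδ'0, hδ'pos, htri', hrev'⟩ := blockExt h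
  have hδ'nn : ∀ k, 0 ≤ δ' k := by
    intro k
    rcases Nat.eq_zero_or_pos k with rfl | hk
    · rw [hδ'0]
    · exact le_of_lt (hδ'pos k (by omega))
  have tri3 : ∀ a b c : ℕ, (c = a + b ∨ a = b + c ∨ b = a + c) →
      |δ' a - δ' b| ≤ δ' c ∧ δ' c ≤ δ' a + δ' b := by
    intro a b c hc
    constructor
    · rw [abs_sub_le_iff]
      rcases hc with rfl | rfl | rfl
      · constructor
        · have := hrev' a b; linarith
        · have := hrev' b a; rw [add_comm b a] at this; linarith
      · constructor
        · have := htri' b c; linarith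
        · have := hrev' b c; linarith [hδ'nn c]
      · constructor
        · have := hrev' a c; linarith [hδ'nn c]
        · have := htri' a c; linarith
    · rcases hc with rfl | rfl | rfl
      · exact htri' a b
      · have := hrev' c b; rw [add_comm c b] at this; linarith
      · have := hrev' c a; rw [add_comm c a] at this; linarith
  set T : ℤ := S.lo + M' with hTdef
  have hThi : S.hi + 1 < T := by omega
  -- the fill procedure
  have fill : ∀ n : ℕ, (n : ℤ) ≤ T - 1 - S.hi → ∃ xs' : ℤ → X,
      (∀ i, S.lo ≤ i → i ≤ S.hi → xs' i = S.xs i) ∧ xs' T = y ∧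
      (∀ i j, ((S.lo ≤ i ∧ i ≤ S.hi + n) ∨ i = T) → ((S.lo ≤ j ∧ j ≤ S.hi + n) ∨ j = T) →
        dist (xs' i) (xs' j) = ((δ' (i - j).natAbs : ℚ) : ℝ)) := by
    intro n
    induction n with
    | zero =>
      intro _
      refine ⟨Function.update S.xs T y, ?_, Function.update_self T y S.xs, ?_⟩
      · intro i h1 h2
        exact Function.update_of_ne (show i ≠ T by omega) y S.xs
      · intro i j hi hj
        have upd : ∀ u : ℤ, S.lo ≤ u → u ≤ S.hi → Function.update S.xs T y u = S.xs u :=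
          fun u h1 h2 => Function.update_of_ne (show u ≠ T by omega) y S.xs
        simp only [Nat.cast_zero, add_zero] at hi hj
        rcases hi with ⟨hi1, hi2⟩ | rfl
        · rcases hj with ⟨hj1, hj2⟩ | rfl
          · rw [upd i hi1 hi2, upd j hj1 hj2, hd i j hi1 hi2 hj1 hj2]
            congr 2
            exact (hlow _ (by omega)).symm
          · rw [upd i hi1 hi2, Function.update_self]
            obtain ⟨t, ht⟩ : ∃ t : ℕ, (t:ℤ) = i - S.lo := ⟨(i - S.lo).toNat, by omega⟩
            have htW : t ≤ W := by omega
            have hiT : (i - T).natAbs = M' - t := by omega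
            rw [hiT, hblock t htW, dist_comm]
            have hieq : S.lo + (t:ℤ) = i := by omega
            rw [hgcast t, hieq]
        · rcases hj with ⟨hj1, hj2⟩ | rfl
          · rw [upd j hj1 hj2, Function.update_self]
            obtain ⟨t, ht⟩ : ∃ t : ℕ, (t:ℤ) = j - S.lo := ⟨(j - S.lo).toNat, by omega⟩
            have htW : t ≤ W := by omega
            have hiT : (T - j).natAbs = M' - t := by omega
            rw [hiT, hblock t htW]
            have hjeq : S.lo + (t:ℤ) = j := by omega
            rw [hgcast t, hjeq]
          · simp [hδ'0]
    | succ n ih =>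
      intro hn
      obtain ⟨xs', hold, hT, hinv⟩ := ih (by omega)
      set p : ℤ := S.hi + n + 1 with hpdef
      set s : Finset ℤ := insert T (Finset.Icc S.lo (S.hi + n)) with hsdef
      have hmem : ∀ i : ℤ, i ∈ s ↔ ((S.lo ≤ i ∧ i ≤ S.hi + n) ∨ i = T) := by
        intro i
        simp only [hsdef, Finset.mem_insert, Finset.mem_Icc]
        tauto
      obtain ⟨z, hz⟩ := ext_at hX s xs' (fun i => δ' ((p - i).natAbs))
        (by
          intro i hi j hj heq
          by_contra hne
          have h1 := hinv i j ((hmem i).mp hi) ((hmem j).mp hj)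
          rw [heq] at h1
          simp only [dist_self] at h1
          have h2 : (0:ℝ) < ((δ' (i - j).natAbs : ℚ) : ℝ) := by
            exact_mod_cast hδ'pos (i - j).natAbs (by omega)
          rw [← h1] at h2
          exact lt_irrefl _ h2)
        (fun i _ => hδ'nn _)
        (by
          intro i hi j hj
          have h1 := hinv i j ((hmem i).mp hi) ((hmem j).mp hj)
          rw [h1]
          set a : ℕ := (p - i).natAbs
          set b : ℕ := (p - j).natAbs
          set c : ℕ := (i - j).natAbs
          have hrel : c = a + b ∨ a = b + c ∨ b = a + c := by omega
          have h2 := tri3 a b c hrel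
          constructor
          · have : |(δ' a : ℝ) - (δ' b : ℝ)| ≤ ((δ' c : ℚ) : ℝ) := by
              exact_mod_cast h2.1
            convert this using 2 <;> norm_cast
          · exact_mod_cast h2.2)
      refine ⟨Function.update xs' p z, ?_, ?_, ?_⟩
      · intro i h1 h2
        rw [Function.update_of_ne (by omega) z xs']
        exact hold i h1 h2
      · rw [Function.update_of_ne (by omega) z xs']
        exact hT
      · intro i j hi hj
        have hpn : ((n:ℤ)+1) = ((n+1 : ℕ) : ℤ) := by push_cast; ring
        have hmem' : ∀ u : ℤ, ((S.lo ≤ u ∧ u ≤ S.hi + (n+1:ℕ)) ∨ u = T) →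
            u = p ∨ ((S.lo ≤ u ∧ u ≤ S.hi + n) ∨ u = T) := by
          intro u hu
          rcases hu with ⟨h1, h2⟩ | rfl
          · push_cast at h2
            by_cases hup : u = p
            · exact Or.inl hup
            · exact Or.inr (Or.inl ⟨h1, by omega⟩)
          · exact Or.inr (Or.inr rfl)
        have hupd : ∀ u : ℤ, ((S.lo ≤ u ∧ u ≤ S.hi + n) ∨ u = T) →
            Function.update xs' p z u = xs' u := by
          intro u hu
          refine Function.update_of_ne ?_ z xs'
          rcases hu with ⟨h1, h2⟩ | rfl <;> omega
        rcases hmem' i hi with rfl | hi' <;> rcases hmem' j hj with rfl | hj'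
        · simp [hδ'0]
        · rw [Function.update_self, hupd j hj']
          have := hz j ((hmem j).mpr hj')
          rw [this]
        · rw [Function.update_self, hupd i hi', dist_comm]
          have := hz i ((hmem i).mpr hi')
          rw [this]
          congr 2
          omega
        · rw [hupd i hi', hupd j hj']
          exact hinv i j hi' hj'
  obtain ⟨xs', hold, hT, hinv⟩ := fill (T - 1 - S.hi).toNat (by omega)
  have hlo0 := S.hlo
  have hhi0 := S.hhi
  have hlen0 := S.hlen
  refine ⟨⟨S.lo, T, xs', δ', S.hlo, by omega, by omega, ?_, ?_⟩, rfl,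
    by show S.hi < T; omega, ?_, ?_⟩
  · intro i j h1 h2 h3 h4
    apply hinv <;> omega
  · intro k hk hk2
    exact hδ'pos k hk
  · intro i h1 h2
    exact hold i h1 h2
  · exact hT

lemma left_grow (hX : IsRationalUrysohn X) (S : PState X) :
    ∃ S' : PState X, S'.hi = S.hi ∧ S'.lo < S.lo ∧
      (∀ i, S.lo ≤ i → i ≤ S.hi → S'.xs i = S.xs i) := by
  obtain ⟨z, hz⟩ := PState.fresh_exists hX (S.mirror)
  obtain ⟨S1, h1, h2, h3, h4⟩ := place_exists hX (S.mirror) z hz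
  have hm1 : S.mirror.lo = -S.hi := rfl
  have hm2 : S.mirror.hi = -S.lo := rfl
  refine ⟨S1.mirror, ?_, ?_, ?_⟩
  · show -S1.lo = S.hi
    rw [h1, hm1]; ring
  · show -S1.hi < S.lo
    rw [hm2] at h2; omega
  · intro i hi1 hi2
    show S1.xs (-i) = S.xs i
    have := h3 (-i) (by rw [hm1]; omega) (by rw [hm2]; omega)
    rw [this]
    show S.xs (-(-i)) = S.xs i
    rw [neg_neg]

lemma step_exists (hX : IsRationalUrysohn X) (S : PState X) (y : X) :
    ∃ S' : PState X, S'.lo < S.lo ∧ S.hi < S'.hi ∧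
      (∀ i, S.lo ≤ i → i ≤ S.hi → S'.xs i = S.xs i) ∧
      (∃ m, S'.lo ≤ m ∧ m ≤ S'.hi ∧ S'.xs m = y) := by
  by_cases hy : ∃ i, S.lo ≤ i ∧ i ≤ S.hi ∧ S.xs i = y
  · obtain ⟨z, hz⟩ := PState.fresh_exists hX S
    obtain ⟨S1, e1, e2, e3, e4⟩ := place_exists hX S z hz
    obtain ⟨S2, f1, f2, f3⟩ := left_grow hX S1
    obtain ⟨i, hi1, hi2, hi3⟩ := hy
    have agree : ∀ j, S.lo ≤ j → j ≤ S.hi → S2.xs j = S.xs j := by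
      intro j h1 h2
      rw [f3 j (by omega) (by omega), e3 j h1 h2]
    refine ⟨S2, by omega, by omega, agree, ⟨i, by omega, by omega, ?_⟩⟩
    rw [agree i hi1 hi2]
    exact hi3
  · push_neg at hy
    obtain ⟨S1, e1, e2, e3, e4⟩ := place_exists hX S y
      (fun i a b => (hy i a b).symm)
    obtain ⟨S2, f1, f2, f3⟩ := left_grow hX S1
    have hlen1 := S1.hlen
    have agree : ∀ j, S.lo ≤ j → j ≤ S.hi → S2.xs j = S.xs j := by
      intro j h1 h2
      rw [f3 j (by omega) (by omega), e3 j h1 h2]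
    refine ⟨S2, by omega, by omega, agree, ⟨S1.hi, by omega, by omega, ?_⟩⟩
    rw [f3 S1.hi (by omega) (by omega)]
    exact e4

lemma init_exists (hX : IsRationalUrysohn X) : ∃ S : PState X, True := by
  classical
  have x0 : X := Classical.choice hX.1
  obtain ⟨z, hz⟩ := hX.2.2.2 {x0} (fun _ => 1) (by intro a _; norm_num)
    (by
      intro a ha b hb
      rw [Finset.mem_singleton] at ha hb
      subst ha; subst hb
      simp)
  have hzx : dist z x0 = (1:ℝ) := by
    have := hz x0 (Finset.mem_singleton_self x0)
    simpa using this
  refine ⟨⟨0, 1, fun i => if i = 1 then z else x0, fun k => if k = 0 then 0 else 1,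
    le_refl 0, by norm_num, by norm_num, ?_, ?_⟩, trivial⟩
  · intro i j h1 h2 h3 h4
    have hi : i = 0 ∨ i = 1 := by omega
    have hj : j = 0 ∨ j = 1 := by omega
    rcases hi with rfl | rfl <;> rcases hj with rfl | rfl <;> norm_num
    · rw [dist_comm]; rw [hzx]
    · rw [hzx]
  · intro k hk _
    simp [hk]

noncomputable def chain (hX : IsRationalUrysohn X) (e : ℕ → X) : ℕ → PState X :=
  fun n => Nat.rec (Classical.choose (init_exists hX))
    (fun n S => Classical.choose (step_exists hX S (e n))) n

lemma chain_succ_spec (hX : IsRationalUrysohn X) (e : ℕ → X) (n : ℕ) :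
    (chain hX e (n+1)).lo < (chain hX e n).lo ∧ (chain hX e n).hi < (chain hX e (n+1)).hi ∧
      (∀ i, (chain hX e n).lo ≤ i → i ≤ (chain hX e n).hi →
        (chain hX e (n+1)).xs i = (chain hX e n).xs i) ∧
      (∃ m, (chain hX e (n+1)).lo ≤ m ∧ m ≤ (chain hX e (n+1)).hi ∧
        (chain hX e (n+1)).xs m = e n) :=
  Classical.choose_spec (step_exists hX (chain hX e n) (e n))

lemma chain_le (hX : IsRationalUrysohn X) (e : ℕ → X) :
    ∀ m n : ℕ, m ≤ n → (chain hX e n).lo ≤ (chain hX e m).lo ∧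
      (chain hX e m).hi ≤ (chain hX e n).hi ∧
      (∀ i, (chain hX e m).lo ≤ i → i ≤ (chain hX e m).hi →
        (chain hX e n).xs i = (chain hX e m).xs i) := by
  intro m n hmn
  induction n with
  | zero =>
    have : m = 0 := by omega
    subst this
    exact ⟨le_refl _, le_refl _, fun i _ _ => rfl⟩
  | succ n ih =>
    rcases Nat.lt_or_ge m (n+1) with hlt | hge
    · have hmn' : m ≤ n := by omega
      obtain ⟨a1, a2, a3⟩ := ih hmn'
      obtain ⟨b1, b2, b3, _⟩ := chain_succ_spec hX e n
      refine ⟨by omega, by omega, ?_⟩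
      intro i h1 h2
      rw [b3 i (by omega) (by omega), a3 i h1 h2]
    · have : m = n + 1 := by omega
      subst this
      exact ⟨le_refl _, le_refl _, fun i _ _ => rfl⟩

lemma chain_bounds (hX : IsRationalUrysohn X) (e : ℕ → X) :
    ∀ n : ℕ, (chain hX e n).lo ≤ -(n:ℤ) ∧ (n:ℤ) ≤ (chain hX e n).hi := by
  intro n
  induction n with
  | zero =>
    exact ⟨by simpa using (chain hX e 0).hlo, by simpa using (chain hX e 0).hhi⟩
  | succ n ih =>
    obtain ⟨b1, b2, _, _⟩ := chain_succ_spec hX e n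
    constructor
    · push_cast; omega
    · push_cast; omega

noncomputable def Phi (hX : IsRationalUrysohn X) (e : ℕ → X) : ℤ → X :=
  fun i => (chain hX e i.natAbs).xs i

lemma Phi_mem (hX : IsRationalUrysohn X) (e : ℕ → X) (i : ℤ) :
    (chain hX e i.natAbs).lo ≤ i ∧ i ≤ (chain hX e i.natAbs).hi := by
  obtain ⟨h1, h2⟩ := chain_bounds hX e i.natAbs
  omega

lemma Phi_eq (hX : IsRationalUrysohn X) (e : ℕ → X) (n : ℕ) (i : ℤ)
    (h1 : (chain hX e n).lo ≤ i) (h2 : i ≤ (chain hX e n).hi) :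
    Phi hX e i = (chain hX e n).xs i := by
  set N := max n i.natAbs with hN
  obtain ⟨a1, a2, a3⟩ := chain_le hX e n N (le_max_left _ _)
  obtain ⟨b1, b2, b3⟩ := chain_le hX e i.natAbs N (le_max_right _ _)
  obtain ⟨c1, c2⟩ := Phi_mem hX e i
  rw [Phi, ← b3 i c1 c2, a3 i h1 h2]

lemma Phi_dist (hX : IsRationalUrysohn X) (e : ℕ → X) (i j k l : ℤ)
    (h : (i - j).natAbs = (k - l).natAbs) :
    dist (Phi hX e i) (Phi hX e j) = dist (Phi hX e k) (Phi hX e l) := by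
  set N := max (max i.natAbs j.natAbs) (max k.natAbs l.natAbs) with hN
  obtain ⟨hb1, hb2⟩ := chain_bounds hX e N
  have hwin : ∀ u : ℤ, u.natAbs ≤ N → (chain hX e N).lo ≤ u ∧ u ≤ (chain hX e N).hi := by
    intro u hu; omega
  have hiw := hwin i (by omega)
  have hjw := hwin j (by omega)
  have hkw := hwin k (by omega)
  have hlw := hwin l (by omega)
  rw [Phi_eq hX e N i hiw.1 hiw.2, Phi_eq hX e N j hjw.1 hjw.2,
    Phi_eq hX e N k hkw.1 hkw.2, Phi_eq hX e N l hlw.1 hlw.2]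
  rw [(chain hX e N).hdist i j hiw.1 hiw.2 hjw.1 hjw.2,
    (chain hX e N).hdist k l hkw.1 hkw.2 hlw.1 hlw.2, h]

lemma Phi_inj (hX : IsRationalUrysohn X) (e : ℕ → X) : Function.Injective (Phi hX e) := by
  intro i j hij
  by_contra hne
  set N := max i.natAbs j.natAbs with hN
  obtain ⟨hb1, hb2⟩ := chain_bounds hX e N
  have hiw : (chain hX e N).lo ≤ i ∧ i ≤ (chain hX e N).hi := by omega
  have hjw : (chain hX e N).lo ≤ j ∧ j ≤ (chain hX e N).hi := by omega
  rw [Phi_eq hX e N i hiw.1 hiw.2, Phi_eq hX e N j hjw.1 hjw.2] at hij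
  exact hne ((chain hX e N).xs_inj hiw.1 hiw.2 hjw.1 hjw.2 hij)

lemma Phi_surj (hX : IsRationalUrysohn X) (e : ℕ → X) (he : Function.Surjective e) :
    Function.Surjective (Phi hX e) := by
  intro y
  obtain ⟨n, rfl⟩ := he y
  obtain ⟨_, _, _, m, hm1, hm2, hm3⟩ := chain_succ_spec hX e n
  exact ⟨m, by rw [Phi_eq hX e (n+1) m hm1 hm2]; exact hm3⟩

end PartB

end StmtFive

theorem stmt_5 (X : Type*) [MetricSpace X] (hX : IsRationalUrysohn X) :
    ∃ g : X ≃ᵢ X, ∀ x y : X, ∃ n : ℤ, (g ^ n) x = y := by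
  classical
  obtain ⟨e, he⟩ := @exists_surjective_nat X hX.1 hX.2.1
  set Φ := StmtFive.Phi hX e with hΦ
  have hinj := StmtFive.Phi_inj hX e
  have hsurj := StmtFive.Phi_surj hX e he
  have hd := StmtFive.Phi_dist hX e
  set φ : ℤ ≃ X := Equiv.ofBijective Φ ⟨hinj, hsurj⟩ with hφ
  have hφ_apply : ∀ i : ℤ, φ i = Φ i := fun i => rfl
  have hφ_symm : ∀ i : ℤ, φ.symm (Φ i) = i := by
    intro i
    have : φ.symm (φ i) = i := Equiv.symm_apply_apply φ i
    rwa [hφ_apply] at this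
  set E : X ≃ X := φ.symm.trans ((Equiv.addRight (1:ℤ)).trans φ) with hE
  have hE_apply : ∀ x, E x = Φ (φ.symm x + 1) := fun x => rfl
  have hE_Phi : ∀ i : ℤ, E (Φ i) = Φ (i + 1) := by
    intro i
    rw [hE_apply, hφ_symm]
  have hiso : Isometry E := by
    apply Isometry.of_dist_eq
    intro a b
    obtain ⟨i, rfl⟩ := hsurj a
    obtain ⟨j, rfl⟩ := hsurj b
    rw [hE_Phi, hE_Phi]
    exact hd (i+1) (j+1) i j (by omega)
  set g : X ≃ᵢ X := ⟨E, hiso⟩ with hg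
  have hg_Phi : ∀ i : ℤ, g (Φ i) = Φ (i + 1) := hE_Phi
  have hg_inv_Phi : ∀ i : ℤ, g⁻¹ (Φ i) = Φ (i - 1) := by
    intro i
    have h1 : g (Φ (i-1)) = Φ i := by rw [hg_Phi]; congr 1; ring
    have : g⁻¹ (g (Φ (i-1))) = g⁻¹ (Φ i) := by rw [h1]
    rw [show g⁻¹ (g (Φ (i-1))) = Φ (i-1) from (g.symm_apply_apply _ : _)] at this
    exact this.symm
  have hpow : ∀ (n : ℤ) (i : ℤ), (g ^ n) (Φ i) = Φ (i + n) := by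
    intro n
    induction n using Int.induction_on with
    | zero => intro i; simp
    | succ k ih =>
      intro i
      have : g ^ ((k:ℤ) + 1) = g ^ (k:ℤ) * g := by
        rw [zpow_add_one]
      rw [this]
      have : (g ^ (k:ℤ) * g) (Φ i) = (g ^ (k:ℤ)) (g (Φ i)) := rfl
      rw [this, hg_Phi, ih]
      congr 1
      ring
    | pred k ih =>
      intro i
      have : g ^ (-(k:ℤ) - 1) = g ^ (-(k:ℤ)) * g⁻¹ := by
        rw [zpow_sub_one]
      rw [this]
      have : (g ^ (-(k:ℤ)) * g⁻¹) (Φ i) = (g ^ (-(k:ℤ))) (g⁻¹ (Φ i)) := rfl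
      rw [this, hg_inv_Phi, ih]
      congr 1
      ring
  refine ⟨g, ?_⟩
  intro x y
  obtain ⟨i, rfl⟩ := hsurj x
  obtain ⟨j, rfl⟩ := hsurj y
  refine ⟨j - i, ?_⟩
  rw [hpow]
  congr 1
  ring
end
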